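/- arXiv:2111.06194 — 8 statements merged into one kernel-verified Lean document; each statement's English description precedes it below -/
import Mathlib

section
/- Let f : ℝⁿ → ℝ be a continuous convex function and g : ℝⁿ → Y a continuous mapping such that the set-valued mapping G_K(x) := −g(x) + K is graph-convex. If the implication (0 ∈ G_K^∞(h_x) ⟹ h_x = 0) holds for all h_x ∈ ℝⁿ, then the set of feasible shifts S = {s ∈ Y : ∃ x ∈ ℝⁿ, g(x) + s ∈ K} is a closed subset of Y. -/
open Set Filter Topology Bornology Metric
open scoped RealInnerProductSpace

noncomputable section

variable {E : Type*} [NormedAddCommGroup E] [InnerProductSpace ℝ E]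
variable {Y : Type*} [NormedAddCommGroup Y] [InnerProductSpace ℝ Y]

/-- The set of feasible shifts `S = {s | ∃ x, g x + s ∈ K}`. -/
def feasShifts (g : E → Y) (K : Set Y) : Set Y := {s | ∃ x, g x + s ∈ K}

/-- The graph of the set-valued mapping `G_K(x) = -g(x) + K`,
i.e. `{(x, y) | g x + y ∈ K}`. -/
def gphGK (g : E → Y) (K : Set Y) : Set (E × Y) := {p | g p.1 + p.2 ∈ K}

/-- Recession cone of a convex set. -/
def recCone {Z : Type*} [AddCommGroup Z] [Module ℝ Z] (C : Set Z) : Set Z :=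
  {d | ∀ z ∈ C, ∀ t : ℝ, 0 ≤ t → z + t • d ∈ C}

/-- Horizon (recession) function of a finite-valued function `f`. -/
def horizonFn (f : E → ℝ) (h : E) : EReal :=
  ⨆ t : {t : ℝ // 0 < t}, (((f ((t : ℝ) • h) - f 0) / (t : ℝ) : ℝ) : EReal)

/-- The optimal value function `ν(s) = inf {f x : g x + s ∈ K}` of the shifted problem. -/
def valFn (f : E → ℝ) (g : E → Y) (K : Set Y) (s : Y) : EReal :=
  sInf ((fun x => (f x : EReal)) '' {x | g x + s ∈ K})

/-- The solution set `X(s)` of the shifted problem. -/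
def solSet (f : E → ℝ) (g : E → Y) (K : Set Y) (s : Y) : Set E :=
  {x | g x + s ∈ K ∧ ∀ x', g x' + s ∈ K → f x ≤ f x'}

/-- The Lagrangian `l(x,y,λ) = f x + ⟨λ, g x - y⟩`. -/
def lagr (f : E → ℝ) (g : E → Y) (x : E) (y : Y) (l : Y) : ℝ :=
  f x + ⟪l, g x - y⟫

/-- The augmented Lagrangian `l_r(x,y,λ) = f x + ⟨λ, g x - y⟩ + (r/2)‖g x - y‖²`. -/
def auglagr (f : E → ℝ) (g : E → Y) (r : ℝ) (x : E) (y : Y) (l : Y) : ℝ :=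
  f x + ⟪l, g x - y⟫ + r / 2 * ‖g x - y‖ ^ 2

/-- The dual function `θ(λ) = - inf {l(x,y,λ) : x ∈ ℝⁿ, y ∈ K}`. -/
def dualFn (f : E → ℝ) (g : E → Y) (K : Set Y) (l : Y) : EReal :=
  - sInf ((fun p : E × Y => ((lagr f g p.1 p.2 l : ℝ) : EReal)) '' {p | p.2 ∈ K})

/-- Fenchel conjugate of an extended-real-valued function. -/
def econj (h : Y → EReal) (l : Y) : EReal := ⨆ s : Y, (⟪l, s⟫ : EReal) - h s

/-- Convex subdifferential of an extended-real-valued function. -/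
def esubdiff (h : Y → EReal) (s : Y) : Set Y :=
  {l | ∀ s', h s + (⟪l, s' - s⟫ : EReal) ≤ h s'}

/-- Convexity of an extended-real-valued function, via its epigraph. -/
def ERealConvexOn (h : Y → EReal) : Prop :=
  Convex ℝ {p : Y × ℝ | h p.1 ≤ (p.2 : EReal)}

/-- Properness of an extended-real-valued function. -/
def ERealProper (h : Y → EReal) : Prop := (∀ s, h s ≠ ⊥) ∧ ∃ s, h s ≠ ⊤

/-- The optimal value `val(D(s)) = sup_λ [⟨s,λ⟩ - θ(λ)]` of the dual problem `D(s)`. -/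
def dualVal (f : E → ℝ) (g : E → Y) (K : Set Y) (s : Y) : EReal :=
  ⨆ l : Y, (⟪s, l⟫ : EReal) - dualFn f g K l

/-- The solution set `Sol(D(s))` of the dual problem `D(s)`. -/
def dualSol (f : E → ℝ) (g : E → Y) (K : Set Y) (s : Y) : Set Y :=
  {l | ∀ l', (⟪s, l'⟫ : EReal) - dualFn f g K l' ≤ (⟪s, l⟫ : EReal) - dualFn f g K l}

/-- The set of proximal points `argmin_{λ'} [h(λ') + ‖λ' - λ‖²/(2r)]`. -/
def proxSet (h : Y → EReal) (r : ℝ) (l : Y) : Set Y :=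
  {m | ∀ m', h m + ((‖m - l‖ ^ 2 / (2 * r) : ℝ) : EReal) ≤
      h m' + ((‖m' - l‖ ^ 2 / (2 * r) : ℝ) : EReal)}

/-- The Moreau–Yosida regularization `h_r(λ) = inf_{λ'} [h(λ') + ‖λ' - λ‖²/(2r)]`. -/
def moreau (h : Y → EReal) (r : ℝ) (l : Y) : EReal :=
  ⨅ m : Y, (h m + ((‖m - l‖ ^ 2 / (2 * r) : ℝ) : EReal))

/-- If a normalized unbounded sequence inside a closed convex set converges in direction,
the limit direction lies in the recession cone. -/
private lemma mem_recCone_of_tendsto {Z : Type*} [NormedAddCommGroup Z] [NormedSpace ℝ Z]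
    {C : Set Z} (hC : IsClosed C) (hconv : Convex ℝ C)
    {u : ℕ → Z} (hu : ∀ m, u m ∈ C) {t : ℕ → ℝ}
    (ht : Filter.Tendsto t atTop atTop) {d : Z}
    (hd : Filter.Tendsto (fun m => (t m)⁻¹ • u m) atTop (𝓝 d)) :
    d ∈ recCone C := by
  intro z hz c hc
  have h1 : Tendsto (fun m => c / t m) atTop (𝓝 0) :=
    tendsto_const_nhds.div_atTop ht
  have h2 : Tendsto (fun m => (c / t m) • u m) atTop (𝓝 (c • d)) := by
    have he : (fun m => (c / t m) • u m) = fun m => c • ((t m)⁻¹ • u m) := by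
      funext m; rw [div_eq_mul_inv, mul_smul]
    rw [he]; exact hd.const_smul c
  have h3 : Tendsto (fun m => (c / t m) • z) atTop (𝓝 (0 : Z)) := by
    simpa using h1.smul_const z
  have hw : Tendsto (fun m => z + ((c / t m) • (u m - z))) atTop (𝓝 (z + c • d)) := by
    have hw0 := Filter.Tendsto.const_add z (h2.sub h3)
    simpa [smul_sub] using hw0
  refine hC.mem_of_tendsto hw ?_
  have hev : ∀ᶠ m in atTop, max c 1 ≤ t m := ht.eventually_ge_atTop _
  filter_upwards [hev] with m hm
  have htm : (0 : ℝ) < t m :=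
    lt_of_lt_of_le (lt_of_lt_of_le zero_lt_one (le_max_right _ _)) hm
  have hl0 : 0 ≤ c / t m := div_nonneg hc htm.le
  have hl1 : c / t m ≤ 1 := by
    rw [div_le_one htm]; exact le_trans (le_max_left c 1) hm
  have hmem := hconv hz (hu m) (sub_nonneg.2 hl1) hl0 (by ring)
  convert hmem using 1
  module

/-- Lemma 2.1: if `0 ∈ G_K^∞(h) ⟹ h = 0`, then the set of feasible
shifts `S` is closed. -/
theorem feasShifts_isClosed {n : ℕ} {Y : Type*} [NormedAddCommGroup Y]
    [InnerProductSpace ℝ Y] [FiniteDimensional ℝ Y]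
    (f : EuclideanSpace ℝ (Fin n) → ℝ) (g : EuclideanSpace ℝ (Fin n) → Y) (K : Set Y)
    (hfconv : ConvexOn ℝ Set.univ f) (hfcont : Continuous f) (hgcont : Continuous g)
    (hKne : K.Nonempty) (hKclosed : IsClosed K) (hKconv : Convex ℝ K)
    (hgraph : Convex ℝ (gphGK g K))
    (hcond : ∀ h : EuclideanSpace ℝ (Fin n),
      (h, (0 : Y)) ∈ recCone (gphGK g K) → h = 0) :
    IsClosed (feasShifts g K) := by
  set C := gphGK g K with hCdef
  have hCclosed : IsClosed C :=
    hKclosed.preimage ((hgcont.comp continuous_fst).add continuous_snd)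
  have himg : feasShifts g K = Prod.snd '' C := by
    ext s
    constructor
    · rintro ⟨x, hx⟩; exact ⟨(x, s), hx, rfl⟩
    · rintro ⟨⟨x, y⟩, hp, rfl⟩; exact ⟨x, hp⟩
  rw [himg]
  refine IsSeqClosed.isClosed ?_
  intro sseq sl hmem hlim
  choose p hpC hps using hmem
  set x : ℕ → EuclideanSpace ℝ (Fin n) := fun m => (p m).1 with hxdef
  have hxC : ∀ m, ((x m, sseq m) : _ × Y) ∈ C := by
    intro m
    have he : ((x m, sseq m) : _ × Y) = p m := by rw [hxdef, ← hps m]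
    rw [he]; exact hpC m
  have hbound : ∃ R, ∀ m, ‖x m‖ ≤ R := by
    by_contra hb
    push_neg at hb
    have hfreq : ∀ k : ℕ, ∃ᶠ m in atTop, (k : ℝ) < ‖x m‖ := by
      intro k
      by_contra hf
      rw [Filter.not_frequently] at hf
      simp only [not_lt] at hf
      obtain ⟨N, hN⟩ := Filter.eventually_atTop.1 hf
      obtain ⟨B, hB⟩ := ((Set.finite_Iio N).image fun m => ‖x m‖).bddAbove
      obtain ⟨m, hm⟩ := hb (max B k)
      rcases lt_or_ge m N with h | h
      · exact absurd (le_max_of_le_left (hB ⟨m, h, rfl⟩)) (not_le.2 hm)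
      · exact absurd (le_max_of_le_right (hN m h)) (not_le.2 hm)
    obtain ⟨φ, hφmono, hφ⟩ := Filter.extraction_forall_of_frequently hfreq
    set t : ℕ → ℝ := fun k => ‖x (φ k)‖ with htdef
    have htpos : ∀ k, 0 < t k := fun k => lt_of_le_of_lt (Nat.cast_nonneg k) (hφ k)
    have htop : Tendsto t atTop atTop :=
      tendsto_atTop_mono (fun k => (hφ k).le) tendsto_natCast_atTop_atTop
    set d : ℕ → EuclideanSpace ℝ (Fin n) := fun k => (t k)⁻¹ • x (φ k) with hddef
    have hdsphere : ∀ k, d k ∈ Metric.sphere (0 : EuclideanSpace ℝ (Fin n)) 1 := by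
      intro k
      have hnorm : ‖d k‖ = 1 := by
        rw [hddef]
        rw [norm_smul, Real.norm_eq_abs, abs_of_pos (inv_pos.2 (htpos k))]
        exact inv_mul_cancel₀ (htpos k).ne'
      simpa [mem_sphere_iff_norm] using hnorm
    obtain ⟨a, ha, ψ, hψmono, hψ⟩ := (isCompact_sphere (0 : EuclideanSpace ℝ (Fin n)) 1).tendsto_subseq hdsphere
    have hane : a ≠ 0 := by
      intro h
      rw [h] at ha
      simp at ha
    have hrc : ((a, (0 : Y))) ∈ recCone C := by
      refine mem_recCone_of_tendsto hCclosed hgraph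
        (u := fun k => ((x (φ (ψ k)), sseq (φ (ψ k))) : _ × Y))
        (fun k => hxC _) (t := fun k => t (ψ k))
        (htop.comp hψmono.tendsto_atTop) ?_
      have h1 : Tendsto (fun k => (t (ψ k))⁻¹ • x (φ (ψ k))) atTop (𝓝 a) := hψ
      have h2 : Tendsto (fun k => (t (ψ k))⁻¹ • sseq (φ (ψ k))) atTop (𝓝 (0 : Y)) := by
        have hi : Tendsto (fun k => (t (ψ k))⁻¹) atTop (𝓝 (0 : ℝ)) :=
          (htop.comp hψmono.tendsto_atTop).inv_tendsto_atTop
        have hs : Tendsto (fun k => sseq (φ (ψ k))) atTop (𝓝 sl) :=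
          hlim.comp ((hφmono.comp hψmono).tendsto_atTop)
        simpa using hi.smul hs
      simpa [Prod.smul_mk] using h1.prodMk_nhds h2
    exact hane (hcond a hrc)
  obtain ⟨R, hR⟩ := hbound
  have hball : ∀ m, x m ∈ Metric.closedBall (0 : EuclideanSpace ℝ (Fin n)) R := by
    intro m; simpa using hR m
  obtain ⟨a, -, φ, hφmono, hxlim⟩ :=
    (isCompact_closedBall (0 : EuclideanSpace ℝ (Fin n)) R).tendsto_subseq hball
  have hmemC : ((a, sl) : _ × Y) ∈ C := by
    refine hCclosed.mem_of_tendsto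
      ((hxlim : Tendsto (fun m => x (φ m)) atTop (𝓝 a)).prodMk_nhds
        (hlim.comp hφmono.tendsto_atTop)) ?_
    exact Filter.Eventually.of_forall fun m => hxC (φ m)
  exact ⟨(a, sl), hmemC, rfl⟩
end
end

section
/- Let K = {0_q} × ℝ^p_− ⊆ ℝ^{q+p} and g(x) = (a₁ᵀx − b₁, …, a_qᵀx − b_q, g_{q+1}(x), …, g_{q+p}(x))ᵀ, where each g_i (i = q+1, …, q+p) is a lower semicontinuous convex function on ℝⁿ. If the implication (a_jᵀw = 0 for all j = 1,…,q and g_i^∞(w) ≤ 0 for all i = q+1,…,q+p ⟹ w = 0) holds, then the set of feasible shifts S = {s ∈ ℝ^{q+p} : ∃ x ∈ ℝⁿ, g(x) + s ∈ K} is closed. -/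
/-!
Let `s_k → s` be feasible shifts with feasible points `x_k`. If `‖x_k‖ → ∞`, a limit `w` of
`x_k / ‖x_k‖` has `‖w‖ = 1`, while `⟪a_j, w⟫ = 0` because `⟪a_j, x_k⟫ = b_j - s_{k,j}` stays
bounded, and `g_i^∞(w) ≤ 0` because `g_i(x_k) ≤ -s_{k,i}` stays bounded above; the horizon
condition then forces `w = 0`. Hence `x_k` has a convergent subsequence, and its limit is feasible
for `s` by continuity of the affine constraints and lower semicontinuity of the `g_i`.
-/

open Set Filter Topology Bornology Metric
open scoped RealInnerProductSpace

noncomputable section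

variable {E : Type*} [NormedAddCommGroup E] [InnerProductSpace ℝ E]
variable {Y : Type*} [NormedAddCommGroup Y] [InnerProductSpace ℝ Y]

theorem LowerSemicontinuous.le_of_tendsto {α ι : Type*} [TopologicalSpace α] {f : α → ℝ}
    (hf : LowerSemicontinuous f) {l : Filter ι} [l.NeBot] {x : ι → α} {z : α} {c : ι → ℝ}
    {C : ℝ} (hx : Tendsto x l (𝓝 z)) (hc : Tendsto c l (𝓝 C)) (hle : ∀ᶠ k in l, f (x k) ≤ c k) :
    f z ≤ C :=
  hf.isClosed_epigraph.mem_of_tendsto (hx.prodMk_nhds hc) hle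

theorem ConvexOn.apply_smul_le {F : Type*} [AddCommGroup F] [Module ℝ F] {s : Set F} {f : F → ℝ}
    (hf : ConvexOn ℝ s f) (h₀ : 0 ∈ s) {x : F} (hx : x ∈ s) {θ : ℝ} (hθ₀ : 0 ≤ θ) (hθ₁ : θ ≤ 1) :
    f (θ • x) ≤ (1 - θ) * f 0 + θ * f x := by
  simpa using hf.2 h₀ hx (sub_nonneg.2 hθ₁) hθ₀ (sub_add_cancel 1 θ)

theorem exists_subseq_tendsto_of_not_tendsto_norm_atTop {F : Type*} [SeminormedAddCommGroup F]
    [ProperSpace F] {x : ℕ → F} (hx : ¬ Tendsto (‖x ·‖) atTop atTop) :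
    ∃ z, ∃ φ : ℕ → ℕ, StrictMono φ ∧ Tendsto (x ∘ φ) atTop (𝓝 z) := by
  obtain ⟨M, hM⟩ : ∃ M, ∃ᶠ k in atTop, ‖x k‖ < M := by
    simpa only [Filter.tendsto_atTop, not_forall, not_eventually, not_le] using hx
  obtain ⟨z, -, hz⟩ := tendsto_subseq_of_frequently_bounded isBounded_ball
    (hM.mono fun _ => mem_ball_zero_iff.2)
  exact ⟨z, hz⟩

theorem exists_subseq_tendsto_normalize {F : Type*} [NormedAddCommGroup F] [NormedSpace ℝ F]
    [ProperSpace F] {x : ℕ → F} (hx : Tendsto (‖x ·‖) atTop atTop) :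
    ∃ w, ‖w‖ = 1 ∧ ∃ φ : ℕ → ℕ, StrictMono φ ∧
      Tendsto (fun k => ‖x (φ k)‖⁻¹ • x (φ k)) atTop (𝓝 w) := by
  have hunit : ∀ k, ‖(‖x k‖⁻¹ • x k)‖ ≤ 1 := fun k => by
    rw [norm_smul, norm_inv, norm_norm]
    exact inv_mul_le_one_of_le₀ le_rfl (norm_nonneg _)
  obtain ⟨w, -, φ, hφ, hw⟩ := tendsto_subseq_of_bounded (isBounded_closedBall (x := (0 : F)))
    (fun k => mem_closedBall_zero_iff.2 (hunit k))
  have hnorm : ∀ᶠ k in atTop, ‖(‖x (φ k)‖⁻¹ • x (φ k))‖ = 1 := by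
    filter_upwards [(hx.comp hφ.tendsto_atTop).eventually_gt_atTop 0] with k hk
    exact norm_smul_inv_norm (norm_pos_iff.1 hk)
  exact ⟨w, tendsto_nhds_unique hw.norm (tendsto_const_nhds.congr' (hnorm.mono fun _ h => h.symm)),
    φ, hφ, hw⟩

section Recession

variable {ι : Type*} {l : Filter ι} [l.NeBot] {x : ι → E} {w : E}

theorem horizonFn_nonpos_of_forall_le {f : E → ℝ} (h : ∀ t : ℝ, 0 < t → f (t • w) ≤ f 0) :
    horizonFn f w ≤ 0 :=
  iSup_le fun t => EReal.coe_nonpos.2 <|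
    div_nonpos_of_nonpos_of_nonneg (sub_nonpos.2 (h t t.2)) t.2.le

theorem inner_eq_zero_of_tendsto_normalize (hx : Tendsto (‖x ·‖) l atTop)
    (hw : Tendsto (fun k => ‖x k‖⁻¹ • x k) l (𝓝 w)) {a : E}
    (ha : IsBoundedUnder (· ≤ ·) l fun k => ‖⟪a, x k⟫‖) : ⟪a, w⟫ = 0 := by
  refine tendsto_nhds_unique (tendsto_const_nhds.inner hw) ?_
  simpa only [real_inner_smul_right, Pi.inv_apply] using
    hx.inv_tendsto_atTop.zero_mul_isBoundedUnder_le ha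

/-- Writing `t‖x‖⁻¹ x = (1 - t/‖x‖) • 0 + (t/‖x‖) • x`, convexity bounds `f (t‖x‖⁻¹ x)` by a
quantity tending to `f 0`, and lower semicontinuity passes the bound to the limit `f (t • w)`. -/
theorem horizonFn_nonpos_of_tendsto_normalize {f : E → ℝ} (hconv : ConvexOn ℝ univ f)
    (hlsc : LowerSemicontinuous f) (hx : Tendsto (‖x ·‖) l atTop)
    (hw : Tendsto (fun k => ‖x k‖⁻¹ • x k) l (𝓝 w))
    (hf : IsBoundedUnder (· ≤ ·) l fun k => f (x k)) : horizonFn f w ≤ 0 := by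
  obtain ⟨M, hM⟩ := hf.eventually_le
  refine horizonFn_nonpos_of_forall_le fun t ht => ?_
  have hθ : Tendsto (fun k => t / ‖x k‖) l (𝓝 0) := tendsto_const_nhds.div_atTop hx
  have hbound : Tendsto (fun k => (1 - t / ‖x k‖) * f 0 + t / ‖x k‖ * M) l (𝓝 (f 0)) := by
    simpa using
      ((tendsto_const_nhds (x := (1 : ℝ)) |>.sub hθ).mul_const (f 0)).add (hθ.mul_const M)
  refine hlsc.le_of_tendsto (hw.const_smul t) hbound ?_
  filter_upwards [hM, hx.eventually_ge_atTop t] with k hMk htk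
  have hθ₀ : 0 ≤ t / ‖x k‖ := div_nonneg ht.le (norm_nonneg _)
  calc f (t • ‖x k‖⁻¹ • x k) = f ((t / ‖x k‖) • x k) := by rw [smul_smul, div_eq_mul_inv]
    _ ≤ (1 - t / ‖x k‖) * f 0 + t / ‖x k‖ * f (x k) :=
      hconv.apply_smul_le (mem_univ _) (mem_univ _) hθ₀ (div_le_one_of_le₀ htk (norm_nonneg _))
    _ ≤ (1 - t / ‖x k‖) * f 0 + t / ‖x k‖ * M := by gcongr

end Recession

theorem not_tendsto_norm_atTop_of_recession [ProperSpace E] {κ μ : Type*} (a : κ → E)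
    (f : μ → E → ℝ) (hconv : ∀ i, ConvexOn ℝ univ (f i)) (hlsc : ∀ i, LowerSemicontinuous (f i))
    (hrec : ∀ w : E, (∀ j, ⟪a j, w⟫ = 0) → (∀ i, horizonFn (f i) w ≤ 0) → w = 0)
    {x : ℕ → E} (ha : ∀ j, IsBoundedUnder (· ≤ ·) atTop fun k => ‖⟪a j, x k⟫‖)
    (hf : ∀ i, IsBoundedUnder (· ≤ ·) atTop fun k => f i (x k)) :
    ¬ Tendsto (‖x ·‖) atTop atTop := by
  intro hx
  obtain ⟨w, hw₁, φ, hφ, hw⟩ := exists_subseq_tendsto_normalize hx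
  have hxφ : Tendsto (fun k => ‖x (φ k)‖) atTop atTop := hx.comp hφ.tendsto_atTop
  have hw₀ : w = 0 := hrec w
    (fun j => inner_eq_zero_of_tendsto_normalize hxφ hw
      (hφ.tendsto_atTop.isBoundedUnder_comp (ha j)))
    (fun i => horizonFn_nonpos_of_tendsto_normalize (hconv i) (hlsc i) hxφ hw
      (hφ.tendsto_atTop.isBoundedUnder_comp (hf i)))
  simp [hw₀] at hw₁

/-- Corollary 2.1: closedness of the set of feasible shifts for
`K = {0_q} × ℝ^p₋` with affine equality constraints and convex inequality constraints. -/
theorem feasShifts_isClosed_affine_convex {n q p : ℕ}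
    (a : Fin q → EuclideanSpace ℝ (Fin n)) (b : Fin q → ℝ)
    (gi : Fin p → EuclideanSpace ℝ (Fin n) → ℝ)
    (hconv : ∀ i, ConvexOn ℝ Set.univ (gi i))
    (hlsc : ∀ i, LowerSemicontinuous (gi i))
    (hcond : ∀ w : EuclideanSpace ℝ (Fin n),
      (∀ j, ⟪a j, w⟫ = 0) → (∀ i, horizonFn (gi i) w ≤ (0 : EReal)) → w = 0) :
    IsClosed {s : (Fin q → ℝ) × (Fin p → ℝ) |
      ∃ x, (∀ j, ⟪a j, x⟫ - b j + s.1 j = 0) ∧ (∀ i, gi i x + s.2 i ≤ 0)} := by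
  refine IsSeqClosed.isClosed fun s s₀ hs hlim => ?_
  choose x hxeq hxle using hs
  have hs₁ j : Tendsto (fun k => (s k).1 j) atTop (𝓝 (s₀.1 j)) :=
    tendsto_pi_nhds.1 hlim.fst_nhds j
  have hs₂ i : Tendsto (fun k => (s k).2 i) atTop (𝓝 (s₀.2 i)) :=
    tendsto_pi_nhds.1 hlim.snd_nhds i
  have hAx k j : ⟪a j, x k⟫ = b j - (s k).1 j := by linarith [hxeq k j]
  have hbdd : ¬ Tendsto (‖x ·‖) atTop atTop := by
    refine not_tendsto_norm_atTop_of_recession a gi hconv hlsc hcond (fun j => ?_) fun i => ?_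
    · simp_rw [hAx]
      exact (tendsto_const_nhds.sub (hs₁ j)).norm.isBoundedUnder_le
    · exact (hs₂ i).neg.isBoundedUnder_le.mono_le (Eventually.of_forall fun k => by
        linarith [hxle k i])
  obtain ⟨x₀, φ, hφ, hx₀⟩ := exists_subseq_tendsto_of_not_tendsto_norm_atTop hbdd
  refine ⟨x₀, fun j => ?_, fun i => ?_⟩
  · have hlim : Tendsto (fun k => ⟪a j, x (φ k)⟫ - b j + (s (φ k)).1 j) atTop
        (𝓝 (⟪a j, x₀⟫ - b j + s₀.1 j)) :=
      ((tendsto_const_nhds.inner hx₀).sub_const (b j)).add ((hs₁ j).comp hφ.tendsto_atTop)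
    exact tendsto_nhds_unique hlim (tendsto_const_nhds.congr fun k => (hxeq (φ k) j).symm)
  · have hle : gi i x₀ ≤ -s₀.2 i := (hlsc i).le_of_tendsto hx₀
      ((hs₂ i).comp hφ.tendsto_atTop).neg (Eventually.of_forall fun k => by
        simp only [Function.comp_apply]; linarith [hxle (φ k) i])
    linarith
end
end

section
/- Let f : ℝⁿ → ℝ be a continuous convex function and g : ℝⁿ → Y a continuous mapping such that G_K(x) := −g(x) + K is graph-convex. Define φ(x,s) = f(x) + δ_K(g(x)+s), where δ_K is the indicator function of K. Then φ(x,s) is level-bounded in x locally uniformly in s (in the sense of Rockafellar–Wets, Definition 1.16: for every s̄ ∈ Y and every α ∈ ℝ there is a neighborhood V of s̄ together with a bounded set B ⊆ ℝⁿ such that {x : φ(x,s) ≤ α} ⊆ B for all s ∈ V) if and only if the implication (f^∞(h_x) ≤ 0 and 0 ∈ G_K^∞(h_x) ⟹ h_x = 0) holds. -/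
open Set Filter Topology Bornology Metric
open scoped RealInnerProductSpace

noncomputable section

variable {E : Type*} [NormedAddCommGroup E] [InnerProductSpace ℝ E]
variable {Y : Type*} [NormedAddCommGroup Y] [InnerProductSpace ℝ Y]

open Classical in
/-- The extended-real-valued indicator function of a set. -/
def eindicator {Z : Type*} (K : Set Z) (y : Z) : EReal := if y ∈ K then 0 else ⊤

/-- `φ(x,s) = f(x) + δ_K(g(x)+s)`. -/
def phiFn (f : E → ℝ) (g : E → Y) (K : Set Y) (x : E) (s : Y) : EReal :=
  (f x : EReal) + eindicator K (g x + s)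

/-!
If `h ≠ 0` satisfies `f^∞(h) ≤ 0` and `(h, 0) ∈ (gph G_K)^∞`, then starting from any feasible
point `(0, s₀)` the whole ray `t • h` stays in the level set `{x | φ(x, s₀) ≤ f 0}`, which is
therefore unbounded.

Conversely, if level sets blow up near `s̄`, pick `s_k → s̄` and `x_k` in the `α`-level set of
`φ(·, s_k)` with `‖x_k‖ → ∞`. By compactness of the unit ball a subsequence of `x_k / ‖x_k‖`
converges to some unit vector `h`. With `c_k = ‖x_k‖⁻¹ → 0`, both `c_k • (x_k, α)` (in the
epigraph of `f`) and `c_k • (x_k, s_k)` (in `gph G_K`) tend to `(h, 0)`; since both sets are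
closed and convex, `(h, 0)` is a recession direction of each, which gives `f^∞(h) ≤ 0` and
`0 ∈ G_K^∞(h)` with `h ≠ 0`.
-/

section RecessionCone

variable {Z : Type*} [AddCommGroup Z] [Module ℝ Z] [TopologicalSpace Z]
  [ContinuousAdd Z] [ContinuousSMul ℝ Z]

/-- The points `(1 - t c_k) z + t c_k x_k` lie in `C` once `t c_k ≤ 1` and converge to
`z + t d`. -/
theorem mem_recCone_of_tendsto_smul {ι : Type*} {l : Filter ι} [l.NeBot] {C : Set Z}
    (hC : IsClosed C) (hCc : Convex ℝ C) {x : ι → Z} {c : ι → ℝ} {d : Z}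
    (hx : ∀ᶠ k in l, x k ∈ C) (hc0 : ∀ᶠ k in l, 0 ≤ c k) (hc : Tendsto c l (𝓝 0))
    (hlim : Tendsto (fun k => c k • x k) l (𝓝 d)) : d ∈ recCone C := by
  intro z hz t ht
  have htc : Tendsto (fun k => t * c k) l (𝓝 0) := by simpa using hc.const_mul t
  have hcomb : Tendsto (fun k => (1 - t * c k) • z + (t * c k) • x k) l (𝓝 (z + t • d)) := by
    have hz' : Tendsto (fun k => (1 - t * c k) • z) l (𝓝 z) := by
      simpa using ((tendsto_const_nhds (x := (1 : ℝ))).sub htc).smul_const z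
    have hx' : Tendsto (fun k => (t * c k) • x k) l (𝓝 (t • d)) := by
      simpa [mul_smul] using hlim.const_smul t
    exact hz'.add hx'
  refine hC.mem_of_tendsto hcomb ?_
  filter_upwards [hx, hc0, htc.eventually_lt_const one_pos] with k hxk hck htck
  exact hCc hz hxk (by linarith) (mul_nonneg ht hck) (by ring)

theorem prodMk_zero_mem_recCone_of_tendsto {G : Type*} [AddCommGroup G] [Module ℝ G]
    [TopologicalSpace G] [ContinuousAdd G] [ContinuousSMul ℝ G]
    {ι : Type*} {l : Filter ι} [l.NeBot] {C : Set (Z × G)}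
    (hC : IsClosed C) (hCc : Convex ℝ C) {x : ι → Z} {y : ι → G} {c : ι → ℝ} {d : Z} {y₀ : G}
    (hmem : ∀ᶠ k in l, (x k, y k) ∈ C) (hc0 : ∀ᶠ k in l, 0 ≤ c k) (hc : Tendsto c l (𝓝 0))
    (hx : Tendsto (fun k => c k • x k) l (𝓝 d)) (hy : Tendsto y l (𝓝 y₀)) :
    (d, (0 : G)) ∈ recCone C :=
  mem_recCone_of_tendsto_smul hC hCc hmem hc0 hc (by simpa using hx.prodMk_nhds (hc.smul hy))

end RecessionCone

theorem eq_zero_of_isBounded_of_forall_smul_mem {F : Type*} [NormedAddCommGroup F]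
    [NormedSpace ℝ F] {B : Set F} (hB : IsBounded B) {h : F}
    (hray : ∀ t : ℝ, 0 < t → t • h ∈ B) : h = 0 := by
  obtain ⟨R, hR, hRB⟩ := hB.exists_pos_norm_le
  by_contra hne
  have hh : 0 < ‖h‖ := norm_pos_iff.2 hne
  have hle := hRB _ (hray ((R + 1) / ‖h‖) (by positivity))
  rw [norm_smul, Real.norm_of_nonneg (by positivity), div_mul_cancel₀ _ hh.ne'] at hle
  linarith

theorem exists_seq_of_not_exists_nhds_isBounded {P F : Type*} [PseudoMetricSpace P]
    [SeminormedAddCommGroup F] {L : P → Set F} {p : P}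
    (H : ¬∃ V ∈ 𝓝 p, ∃ B : Set F, IsBounded B ∧ ∀ s ∈ V, L s ⊆ B) :
    ∃ s : ℕ → P, ∃ x : ℕ → F, Tendsto s atTop (𝓝 p) ∧ (∀ k, x k ∈ L (s k)) ∧
      Tendsto (fun k => ‖x k‖) atTop atTop := by
  push Not at H
  have hk : ∀ k : ℕ, ∃ s, dist s p < 1 / (k + 1) ∧ ∃ x ∈ L s, (k : ℝ) < ‖x‖ := by
    intro k
    obtain ⟨s, hs, hsub⟩ := H _ (ball_mem_nhds p Nat.one_div_pos_of_nat) (closedBall 0 k)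
      isBounded_closedBall
    obtain ⟨x, hx, hxB⟩ := not_subset.1 hsub
    exact ⟨s, hs, x, hx, by simpa using hxB⟩
  choose s hs x hx hxk using hk
  refine ⟨s, x, ?_, hx, tendsto_atTop_mono (fun k => (hxk k).le) tendsto_natCast_atTop_atTop⟩
  rw [tendsto_iff_dist_tendsto_zero]
  exact squeeze_zero (fun _ => dist_nonneg) (fun k => (hs k).le)
    tendsto_one_div_add_atTop_nhds_zero_nat

theorem exists_subseq_tendsto_smul_inv_norm {F : Type*} [NormedAddCommGroup F]
    [NormedSpace ℝ F] [ProperSpace F] {x : ℕ → F}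
    (hx : Tendsto (fun k => ‖x k‖) atTop atTop) :
    ∃ h : F, ‖h‖ = 1 ∧ ∃ φ : ℕ → ℕ, StrictMono φ ∧
      Tendsto (fun k => ‖x (φ k)‖⁻¹ • x (φ k)) atTop (𝓝 h) := by
  have hball : ∀ k, ‖x k‖⁻¹ • x k ∈ closedBall (0 : F) 1 := by
    intro k
    rcases eq_or_ne (x k) 0 with hxk | hxk
    · simp [hxk]
    · simpa using (norm_smul_inv_norm (𝕜 := ℝ) hxk).le
  obtain ⟨h, -, φ, hφ, hlim⟩ := (isCompact_closedBall (0 : F) 1).tendsto_subseq hball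
  refine ⟨h, ?_, φ, hφ, hlim⟩
  have hone : Tendsto (fun k => ‖‖x (φ k)‖⁻¹ • x (φ k)‖) atTop (𝓝 1) := by
    refine tendsto_const_nhds.congr' ?_
    filter_upwards [(hx.comp hφ.tendsto_atTop).eventually_gt_atTop 0] with k hk
    exact (norm_smul_inv_norm (norm_pos_iff.1 hk)).symm
  exact tendsto_nhds_unique hlim.norm hone

theorem phiFn_le_iff {E Y : Type*} [NormedAddCommGroup Y] {f : E → ℝ} {g : E → Y}
    {K : Set Y} {x : E} {s : Y} {α : ℝ} :
    phiFn f g K x s ≤ (α : EReal) ↔ g x + s ∈ K ∧ f x ≤ α := by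
  by_cases h : g x + s ∈ K <;> simp [phiFn, eindicator, h]

theorem horizonFn_le_zero_iff {f : E → ℝ} {h : E} :
    horizonFn f h ≤ 0 ↔ ∀ t : ℝ, 0 < t → f (t • h) ≤ f 0 := by
  simp only [horizonFn, iSup_le_iff, EReal.coe_nonpos, Subtype.forall]
  exact forall₂_congr fun t ht => by rw [div_le_iff₀ ht, zero_mul, sub_nonpos]

theorem horizonFn_le_zero_of_mem_recCone_epigraph {f : E → ℝ} {h : E}
    (hrec : (h, (0 : ℝ)) ∈ recCone {p : E × ℝ | f p.1 ≤ p.2}) : horizonFn f h ≤ 0 :=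
  horizonFn_le_zero_iff.2 fun t ht => by
    simpa using hrec (0, f 0) (le_refl (f 0)) t ht.le

theorem isClosed_gphGK {E Y : Type*} [TopologicalSpace E] [NormedAddCommGroup Y] {g : E → Y}
    {K : Set Y} (hg : Continuous g) (hK : IsClosed K) :
    IsClosed (gphGK g K) :=
  hK.preimage (hg.comp continuous_fst |>.add continuous_snd)

theorem phi_level_bounded_iff_general {n : ℕ} {Y : Type*} [NormedAddCommGroup Y]
    [InnerProductSpace ℝ Y]
    (f : EuclideanSpace ℝ (Fin n) → ℝ) (g : EuclideanSpace ℝ (Fin n) → Y) (K : Set Y)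
    (hfconv : ConvexOn ℝ Set.univ f) (hfcont : Continuous f) (hgcont : Continuous g)
    (hKne : K.Nonempty) (hKclosed : IsClosed K)
    (hgraph : Convex ℝ (gphGK g K)) :
    (∀ (sbar : Y) (α : ℝ), ∃ V ∈ 𝓝 sbar, ∃ B : Set (EuclideanSpace ℝ (Fin n)),
        Bornology.IsBounded B ∧ ∀ s ∈ V, {x | phiFn f g K x s ≤ (α : EReal)} ⊆ B)
    ↔ (∀ h : EuclideanSpace ℝ (Fin n),
        horizonFn f h ≤ (0 : EReal) → (h, (0 : Y)) ∈ recCone (gphGK g K) → h = 0) := by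
  constructor
  · intro hlb h hhor hrec
    obtain ⟨y₀, hy₀⟩ := hKne
    have hfeas : (0, y₀ - g 0) ∈ gphGK g K := by simpa [gphGK] using hy₀
    obtain ⟨V, hV, B, hB, hsub⟩ := hlb (y₀ - g 0) (f 0)
    refine eq_zero_of_isBounded_of_forall_smul_mem hB fun t ht =>
      hsub _ (mem_of_mem_nhds hV) (phiFn_le_iff.2 ⟨?_, horizonFn_le_zero_iff.1 hhor t ht⟩)
    simpa [gphGK] using hrec _ hfeas t ht.le
  · intro himp sbar α
    by_contra hcon
    obtain ⟨s, x, hs, hx, hxn⟩ := exists_seq_of_not_exists_nhds_isBounded hcon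
    simp only [mem_ofPred_eq, phiFn_le_iff] at hx
    obtain ⟨h, hh, φ, hφ, hdir⟩ := exists_subseq_tendsto_smul_inv_norm hxn
    have hc : Tendsto (fun k => ‖x (φ k)‖⁻¹) atTop (𝓝 0) :=
      (hxn.comp hφ.tendsto_atTop).inv_tendsto_atTop
    have hc0 : ∀ᶠ k in atTop, 0 ≤ ‖x (φ k)‖⁻¹ := Eventually.of_forall fun _ => by positivity
    have hepi := prodMk_zero_mem_recCone_of_tendsto
      (isClosed_le (hfcont.comp continuous_fst) continuous_snd)
      (by simpa using hfconv.convex_epigraph) (Eventually.of_forall fun k => (hx (φ k)).2)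
      hc0 hc hdir (tendsto_const_nhds (x := α))
    have hgph := prodMk_zero_mem_recCone_of_tendsto (isClosed_gphGK hgcont hKclosed) hgraph
      (Eventually.of_forall fun k => (hx (φ k)).1) hc0 hc hdir (hs.comp hφ.tendsto_atTop)
    have h0 := himp h (horizonFn_le_zero_of_mem_recCone_epigraph hepi) hgph
    simp [h0] at hh

/-- Proposition 2.2: `φ` is level-bounded in `x` locally uniformly
in `s` iff `(f^∞(h) ≤ 0 and 0 ∈ G_K^∞(h)) ⟹ h = 0`. -/
theorem phi_level_bounded_iff {n : ℕ} {Y : Type*} [NormedAddCommGroup Y]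
    [InnerProductSpace ℝ Y] [FiniteDimensional ℝ Y]
    (f : EuclideanSpace ℝ (Fin n) → ℝ) (g : EuclideanSpace ℝ (Fin n) → Y) (K : Set Y)
    (hfconv : ConvexOn ℝ Set.univ f) (hfcont : Continuous f) (hgcont : Continuous g)
    (hKne : K.Nonempty) (hKclosed : IsClosed K) (hKconv : Convex ℝ K)
    (hgraph : Convex ℝ (gphGK g K)) :
    (∀ (sbar : Y) (α : ℝ), ∃ V ∈ 𝓝 sbar, ∃ B : Set (EuclideanSpace ℝ (Fin n)),
        Bornology.IsBounded B ∧ ∀ s ∈ V, {x | phiFn f g K x s ≤ (α : EReal)} ⊆ B)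
    ↔ (∀ h : EuclideanSpace ℝ (Fin n),
        horizonFn f h ≤ (0 : EReal) → (h, (0 : Y)) ∈ recCone (gphGK g K) → h = 0) :=
  phi_level_bounded_iff_general f g K hfconv hfcont hgcont hKne hKclosed hgraph
end
end

section
/- Let f : ℝⁿ → ℝ be a continuous convex function and g : ℝⁿ → Y a continuous mapping such that G_K(x) := −g(x) + K is graph-convex. Assume the implication (f^∞(h_x) ≤ 0 and 0 ∈ G_K^∞(h_x) ⟹ h_x = 0) holds. Then: (a) the optimal value function ν is proper, lower semi-continuous and convex on Y, and for each s ∈ dom ν the solution set X(s) is nonempty, compact and convex, whereas X(s) = ∅ when s ∉ dom ν; (b) the set-valued mapping X, which is compact-valued with dom X = dom ν, is outer semi-continuous with respect to ν-attentive convergence; (c) X is locally bounded and outer semi-continuous relative to the set int(dom X) = int(dom ν). -/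
open Set Filter Topology Bornology Metric
open scoped RealInnerProductSpace

noncomputable section

variable {E : Type*} [NormedAddCommGroup E] [InnerProductSpace ℝ E]
variable {Y : Type*} [NormedAddCommGroup Y] [InnerProductSpace ℝ Y]

section AuxProofs
set_option linter.unusedSectionVars false

variable {n : ℕ} {Y : Type*} [NormedAddCommGroup Y] [InnerProductSpace ℝ Y]
  [FiniteDimensional ℝ Y]

local notation "En" => EuclideanSpace ℝ (Fin n)

variable {f : EuclideanSpace ℝ (Fin n) → ℝ} {g : EuclideanSpace ℝ (Fin n) → Y} {K : Set Y}

lemma gphGK_isClosed (hg : Continuous g) (hK : IsClosed K) : IsClosed (gphGK g K) :=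
  hK.preimage ((hg.comp continuous_fst).add continuous_snd)

lemma feas_isClosed (hg : Continuous g) (hK : IsClosed K) (s : Y) :
    IsClosed {x : En | g x + s ∈ K} :=
  hK.preimage (hg.add continuous_const)

lemma feas_convex (hgraph : Convex ℝ (gphGK g K)) (s : Y) :
    Convex ℝ {x : En | g x + s ∈ K} := by
  intro x₁ h₁ x₂ h₂ a b ha hb hab
  have h := hgraph (show ((x₁, s) : En × Y) ∈ gphGK g K from h₁)
    (show ((x₂, s) : En × Y) ∈ gphGK g K from h₂) ha hb hab
  have hs : a • s + b • s = s := by rw [← add_smul, hab, one_smul]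
  simpa [gphGK, Prod.smul_mk, Prod.mk_add_mk, hs] using h

/-- The key coercivity consequence: sublevel sets of `f` over feasible points with
bounded shifts are bounded. -/
lemma key_bounded (hfconv : ConvexOn ℝ Set.univ f) (hfcont : Continuous f)
    (hgcont : Continuous g) (hKclosed : IsClosed K)
    (hgraph : Convex ℝ (gphGK g K))
    (hcond : ∀ h : EuclideanSpace ℝ (Fin n),
      horizonFn f h ≤ (0 : EReal) → (h, (0 : Y)) ∈ recCone (gphGK g K) → h = 0)
    (c R : ℝ) :
    Bornology.IsBounded {x : En | f x ≤ c ∧ ∃ s, ‖s‖ ≤ R ∧ g x + s ∈ K} := by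
  by_contra hb
  rw [isBounded_iff_forall_norm_le] at hb
  push_neg at hb
  choose x hx hxn using fun k : ℕ => hb k
  choose hfc s hsR hfeas using hx
  have hxpos : ∀ k : ℕ, 0 < ‖x k‖ := fun k => lt_of_le_of_lt (Nat.cast_nonneg k) (hxn k)
  have hnorm_top : Tendsto (fun k => ‖x k‖) atTop atTop :=
    tendsto_atTop_mono (fun k => (hxn k).le) tendsto_natCast_atTop_atTop
  obtain ⟨h, hh, φ, hφ, hlim⟩ :=
    (isCompact_sphere (0 : En) 1).tendsto_subseq
      (x := fun k => ‖x k‖⁻¹ • x k)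
      (fun k => by
        simp [mem_sphere_zero_iff_norm, norm_smul, abs_of_pos (inv_pos.2 (hxpos k)),
          inv_mul_cancel₀ (hxpos k).ne'])
  have hnh : ‖h‖ = 1 := mem_sphere_zero_iff_norm.1 hh
  have hφnorm : Tendsto (fun k => ‖x (φ k)‖) atTop atTop :=
    hnorm_top.comp hφ.tendsto_atTop
  have hsmul_eq : ∀ t : ℝ, ∀ k, (t / ‖x (φ k)‖) • x (φ k) = t • (‖x (φ k)‖⁻¹ • x (φ k)) := by
    intro t k; rw [smul_smul, div_eq_mul_inv]
  -- horizon function is nonpositive at h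
  have key1 : ∀ t : ℝ, 0 < t → f (t • h) ≤ f 0 := by
    intro t ht
    have ha0 : Tendsto (fun k => t / ‖x (φ k)‖) atTop (𝓝 0) :=
      Tendsto.div_atTop tendsto_const_nhds hφnorm
    have hanneg : ∀ k, 0 ≤ t / ‖x (φ k)‖ := fun k => div_nonneg ht.le (hxpos _).le
    have hlim1 : Tendsto (fun k => f ((t / ‖x (φ k)‖) • x (φ k))) atTop (𝓝 (f (t • h))) := by
      refine (hfcont.tendsto _).comp ?_
      have h1 : Tendsto (fun k => t • (‖x (φ k)‖⁻¹ • x (φ k))) atTop (𝓝 (t • h)) :=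
         hlim.const_smul t
      simpa only [hsmul_eq t] using h1
    have hlim2 : Tendsto
        (fun k => (t / ‖x (φ k)‖) * c + (1 - t / ‖x (φ k)‖) * f 0) atTop (𝓝 (f 0)) := by
      have h2 := (ha0.mul_const c).add (((tendsto_const_nhds (x := (1:ℝ))).sub ha0).mul_const (f 0))
      simpa using h2
    refine le_of_tendsto_of_tendsto hlim1 hlim2 ?_
    filter_upwards [ha0.eventually_le_const one_pos] with k hk1
    set a := t / ‖x (φ k)‖ with ha_def
    have hcvx := hfconv.2 (Set.mem_univ (x (φ k))) (Set.mem_univ (0 : En))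
      (hanneg k) (by linarith [hanneg k, hk1] : (0:ℝ) ≤ 1 - a) (by ring)
    simp only [smul_zero, add_zero, smul_eq_mul] at hcvx
    refine hcvx.trans ?_
    have := mul_le_mul_of_nonneg_left (hfc (φ k)) (hanneg k)
    linarith
  have hhor : horizonFn f h ≤ (0 : EReal) := by
    refine iSup_le fun t => ?_
    have h1 : (f ((t : ℝ) • h) - f 0) / (t : ℝ) ≤ 0 :=
      div_nonpos_of_nonpos_of_nonneg (sub_nonpos.2 (key1 t t.2)) t.2.le
    exact_mod_cast h1
  -- (h, 0) belongs to the recession cone of the graph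
  have hgcl : IsClosed (gphGK g K) := gphGK_isClosed hgcont hKclosed
  have key2 : ((h, (0 : Y)) : En × Y) ∈ recCone (gphGK g K) := by
    rintro z hz t ht
    rcases ht.eq_or_lt with rfl | htpos
    · simpa using hz
    have ha0 : Tendsto (fun k => t / ‖x (φ k)‖) atTop (𝓝 0) :=
      Tendsto.div_atTop tendsto_const_nhds hφnorm
    have hanneg : ∀ k, 0 ≤ t / ‖x (φ k)‖ := fun k => div_nonneg htpos.le (hxpos _).le
    have hmem : ∀ᶠ k in atTop,
        (1 - t / ‖x (φ k)‖) • z + (t / ‖x (φ k)‖) • ((x (φ k), s (φ k)) : En × Y)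
          ∈ gphGK g K := by
      filter_upwards [ha0.eventually_le_const one_pos] with k hk1
      exact hgraph hz (hfeas (φ k)) (by linarith [hanneg k]) (hanneg k) (by ring)
    have hlimp : Tendsto
        (fun k => (1 - t / ‖x (φ k)‖) • z + (t / ‖x (φ k)‖) • ((x (φ k), s (φ k)) : En × Y))
        atTop (𝓝 (z + t • ((h, (0 : Y)) : En × Y))) := by
      have hz1 : Tendsto (fun k => (1 - t / ‖x (φ k)‖) • z) atTop (𝓝 z) := by
        have h3 : Tendsto (fun k => (1 - t / ‖x (φ k)‖)) atTop (𝓝 1) := by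
          simpa using (tendsto_const_nhds.sub ha0)
        simpa using h3.smul (tendsto_const_nhds (x := z))
      have hz2 : Tendsto (fun k => (t / ‖x (φ k)‖) • ((x (φ k), s (φ k)) : En × Y))
          atTop (𝓝 (t • ((h, (0 : Y)) : En × Y))) := by
        refine Tendsto.prodMk_nhds ?_ ?_
        · have h1 : Tendsto (fun k => t • (‖x (φ k)‖⁻¹ • x (φ k))) atTop (𝓝 (t • h)) :=
            hlim.const_smul t
          simpa only [hsmul_eq t] using h1
        · have hsq : Tendsto (fun k => (t / ‖x (φ k)‖) • s (φ k)) atTop (𝓝 (0 : Y)) := by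
            refine squeeze_zero_norm (fun k => ?_) (by simpa using ha0.mul_const (max R 0))
            rw [norm_smul, Real.norm_eq_abs, abs_of_nonneg (hanneg k)]
            exact mul_le_mul_of_nonneg_left ((hsR (φ k)).trans (le_max_left _ _)) (hanneg k)
          simpa using hsq
      simpa using hz1.add hz2
    exact hgcl.mem_of_tendsto hlimp hmem
  have h0 : h = 0 := hcond h hhor key2
  rw [h0, norm_zero] at hnh
  exact one_ne_zero hnh.symm

lemma valFn_eq_of_sol {s : Y} {x : EuclideanSpace ℝ (Fin n)} (hx : x ∈ solSet f g K s) :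
    valFn f g K s = (f x : EReal) := by
  refine le_antisymm (sInf_le ⟨x, hx.1, rfl⟩) (le_sInf ?_)
  rintro b ⟨x', hx', rfl⟩
  exact EReal.coe_le_coe_iff.2 (hx.2 x' hx')

lemma valFn_eq_top_of_infeas {s : Y} (hs : ¬ ∃ x : En, g x + s ∈ K) :
    valFn f g K s = ⊤ := by
  unfold valFn
  rw [show {x : En | g x + s ∈ K} = ∅ from
    Set.eq_empty_iff_forall_notMem.2 fun x hxm => hs ⟨x, hxm⟩, Set.image_empty, sInf_empty]

lemma valFn_ne_top_iff {s : Y} :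
    valFn f g K s ≠ ⊤ ↔ ∃ x : En, g x + s ∈ K := by
  constructor
  · intro hne
    by_contra hs
    exact hne (valFn_eq_top_of_infeas hs)
  · rintro ⟨x, hxm⟩
    exact ne_top_of_le_ne_top (EReal.coe_ne_top (f x)) (sInf_le ⟨x, hxm, rfl⟩)

lemma exists_sol (hfconv : ConvexOn ℝ Set.univ f) (hfcont : Continuous f)
    (hgcont : Continuous g) (hKclosed : IsClosed K) (hgraph : Convex ℝ (gphGK g K))
    (hcond : ∀ h : EuclideanSpace ℝ (Fin n),
      horizonFn f h ≤ (0 : EReal) → (h, (0 : Y)) ∈ recCone (gphGK g K) → h = 0)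
    {s : Y} (hs : ∃ x : En, g x + s ∈ K) :
    ∃ x, x ∈ solSet f g K s ∧ valFn f g K s = (f x : EReal) := by
  obtain ⟨x₀, hx₀⟩ := hs
  have hCb : Bornology.IsBounded {x : En | g x + s ∈ K ∧ f x ≤ f x₀} :=
    (key_bounded hfconv hfcont hgcont hKclosed hgraph hcond (f x₀) ‖s‖).subset
      fun x hxm => ⟨hxm.2, s, le_rfl, hxm.1⟩
  have hCc : IsClosed {x : En | g x + s ∈ K ∧ f x ≤ f x₀} :=
    (feas_isClosed hgcont hKclosed s).inter (isClosed_le hfcont continuous_const)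
  obtain ⟨xm, hxm, hmin⟩ := (Metric.isCompact_of_isClosed_isBounded hCc hCb).exists_isMinOn
    ⟨x₀, hx₀, le_rfl⟩ hfcont.continuousOn
  have hsol : xm ∈ solSet f g K s := by
    refine ⟨hxm.1, fun x' hx' => ?_⟩
    by_cases hfx' : f x' ≤ f x₀
    · exact isMinOn_iff.1 hmin x' ⟨hx', hfx'⟩
    · exact (isMinOn_iff.1 hmin x₀ ⟨hx₀, le_rfl⟩).trans (le_of_not_ge hfx')
  exact ⟨xm, hsol, valFn_eq_of_sol hsol⟩

lemma solSet_eq_sublevel {s : Y} {xm : EuclideanSpace ℝ (Fin n)}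
    (hxm : xm ∈ solSet f g K s) :
    solSet f g K s = {x : En | g x + s ∈ K ∧ f x ≤ f xm} := by
  ext x
  constructor
  · intro hx; exact ⟨hx.1, hx.2 xm hxm.1⟩
  · rintro ⟨hfeas, hle⟩; exact ⟨hfeas, fun x' hx' => hle.trans (hxm.2 x' hx')⟩

lemma solSet_convex (hfconv : ConvexOn ℝ Set.univ f) (hgraph : Convex ℝ (gphGK g K))
    (s : Y) : Convex ℝ (solSet f g K s) := by
  intro x₁ h₁ x₂ h₂ a b ha hb hab
  have hfeas : g (a • x₁ + b • x₂) + s ∈ K :=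
    feas_convex hgraph s h₁.1 h₂.1 ha hb hab
  refine ⟨hfeas, fun x' hx' => ?_⟩
  have hcvx := hfconv.2 (Set.mem_univ x₁) (Set.mem_univ x₂) ha hb hab
  simp only [smul_eq_mul] at hcvx
  have h1 := mul_le_mul_of_nonneg_left (h₁.2 x' hx') ha
  have h2 := mul_le_mul_of_nonneg_left (h₂.2 x' hx') hb
  calc f (a • x₁ + b • x₂) ≤ a * f x₁ + b * f x₂ := hcvx
    _ ≤ a * f x' + b * f x' := add_le_add h1 h2
    _ = f x' := by rw [← add_mul, hab, one_mul]

lemma valFn_ne_bot (hfconv : ConvexOn ℝ Set.univ f) (hfcont : Continuous f)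
    (hgcont : Continuous g) (hKclosed : IsClosed K) (hgraph : Convex ℝ (gphGK g K))
    (hcond : ∀ h : EuclideanSpace ℝ (Fin n),
      horizonFn f h ≤ (0 : EReal) → (h, (0 : Y)) ∈ recCone (gphGK g K) → h = 0)
    (s : Y) : valFn f g K s ≠ ⊥ := by
  by_cases hs : ∃ x : En, g x + s ∈ K
  · obtain ⟨x, -, hval⟩ := exists_sol hfconv hfcont hgcont hKclosed hgraph hcond hs
    rw [hval]; exact EReal.coe_ne_bot _
  · rw [valFn_eq_top_of_infeas hs]; simp

lemma valFn_lsc (hfconv : ConvexOn ℝ Set.univ f) (hfcont : Continuous f)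
    (hgcont : Continuous g) (hKclosed : IsClosed K) (hgraph : Convex ℝ (gphGK g K))
    (hcond : ∀ h : EuclideanSpace ℝ (Fin n),
      horizonFn f h ≤ (0 : EReal) → (h, (0 : Y)) ∈ recCone (gphGK g K) → h = 0) :
    LowerSemicontinuous (valFn f g K) := by
  rw [lowerSemicontinuous_iff_isClosed_preimage]
  intro y
  induction y using EReal.rec with
  | bot =>
    have hE : valFn f g K ⁻¹' Iic ⊥ = ∅ := by
      rw [Set.eq_empty_iff_forall_notMem]
      intro s hs
      exact valFn_ne_bot hfconv hfcont hgcont hKclosed hgraph hcond s (le_bot_iff.1 hs)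
    rw [hE]; exact isClosed_empty
  | coe c =>
    refine IsSeqClosed.isClosed ?_
    intro sq shat hsq hlims
    simp only [Set.mem_preimage, Set.mem_Iic] at hsq ⊢
    have hfe : ∀ k, ∃ x : En, g x + sq k ∈ K := fun k =>
      valFn_ne_top_iff.1 (ne_top_of_le_ne_top (EReal.coe_ne_top c) (hsq k))
    choose xk hsol hval using fun k =>
      exists_sol hfconv hfcont hgcont hKclosed hgraph hcond (hfe k)
    have hfxc : ∀ k, f (xk k) ≤ c := fun k => by
      have h1 := hsq k; rw [hval k] at h1; exact_mod_cast h1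
    obtain ⟨R, hR⟩ := hlims.norm.bddAbove_range
    have hmem : ∀ k, xk k ∈ {x : En | f x ≤ c ∧ ∃ s', ‖s'‖ ≤ R ∧ g x + s' ∈ K} := fun k =>
      ⟨hfxc k, sq k, hR (Set.mem_range_self k), (hsol k).1⟩
    obtain ⟨xhat, -, φ, hφ, hxlim⟩ := tendsto_subseq_of_bounded
      (key_bounded hfconv hfcont hgcont hKclosed hgraph hcond c R) hmem
    have hfeas : g xhat + shat ∈ K := by
      have hpl : Tendsto (fun k => ((xk (φ k), sq (φ k)) : En × Y)) atTop (𝓝 (xhat, shat)) :=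
        hxlim.prodMk_nhds (hlims.comp hφ.tendsto_atTop)
      exact (gphGK_isClosed hgcont hKclosed).mem_of_tendsto hpl
        (Filter.Eventually.of_forall fun k => (hsol (φ k)).1)
    have hfx : f xhat ≤ c :=
      le_of_tendsto ((hfcont.tendsto _).comp hxlim)
        (Filter.Eventually.of_forall fun k => hfxc (φ k))
    exact le_trans (sInf_le ⟨xhat, hfeas, rfl⟩) (EReal.coe_le_coe_iff.2 hfx)
  | top =>
    have hU : valFn f g K ⁻¹' Iic ⊤ = Set.univ := by
      rw [Set.eq_univ_iff_forall]; intro s; simp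
    rw [hU]; exact isClosed_univ

lemma valFn_convexOn (hfconv : ConvexOn ℝ Set.univ f) (hfcont : Continuous f)
    (hgcont : Continuous g) (hKclosed : IsClosed K) (hgraph : Convex ℝ (gphGK g K))
    (hcond : ∀ h : EuclideanSpace ℝ (Fin n),
      horizonFn f h ≤ (0 : EReal) → (h, (0 : Y)) ∈ recCone (gphGK g K) → h = 0) :
    ERealConvexOn (valFn f g K) := by
  rintro ⟨s₁, r₁⟩ hp₁ ⟨s₂, r₂⟩ hp₂ a b ha hb hab
  simp only [Set.mem_setOf_eq] at hp₁ hp₂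
  obtain ⟨x₁, hx₁, hv₁⟩ := exists_sol hfconv hfcont hgcont hKclosed hgraph hcond
    (valFn_ne_top_iff.1 (ne_top_of_le_ne_top (EReal.coe_ne_top r₁) hp₁))
  obtain ⟨x₂, hx₂, hv₂⟩ := exists_sol hfconv hfcont hgcont hKclosed hgraph hcond
    (valFn_ne_top_iff.1 (ne_top_of_le_ne_top (EReal.coe_ne_top r₂) hp₂))
  have hr₁ : f x₁ ≤ r₁ := by rw [hv₁] at hp₁; exact_mod_cast hp₁
  have hr₂ : f x₂ ≤ r₂ := by rw [hv₂] at hp₂; exact_mod_cast hp₂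
  have hfeas : g (a • x₁ + b • x₂) + (a • s₁ + b • s₂) ∈ K :=
    hgraph (show ((x₁, s₁) : En × Y) ∈ gphGK g K from hx₁.1)
      (show ((x₂, s₂) : En × Y) ∈ gphGK g K from hx₂.1) ha hb hab
  have hcvx := hfconv.2 (Set.mem_univ x₁) (Set.mem_univ x₂) ha hb hab
  simp only [smul_eq_mul] at hcvx
  have hle : f (a • x₁ + b • x₂) ≤ a * r₁ + b * r₂ :=
    hcvx.trans (add_le_add (mul_le_mul_of_nonneg_left hr₁ ha)
      (mul_le_mul_of_nonneg_left hr₂ hb))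
  show valFn f g K (a • s₁ + b • s₂) ≤ ((a • r₁ + b • r₂ : ℝ) : EReal)
  rw [smul_eq_mul, smul_eq_mul]
  exact le_trans (sInf_le ⟨_, hfeas, rfl⟩) (EReal.coe_le_coe_iff.2 hle)

end AuxProofs

/-- Proposition 2.3: under the coercivity condition, the optimal value
function `ν` is proper lsc convex, the solution mapping `X` is nonempty-compact-convex
valued on `dom ν` (empty off `dom ν`), is outer semicontinuous w.r.t. `ν`-attentive
convergence, and is locally bounded and outer semicontinuous relative to
`int (dom X) = int (dom ν)`. -/
theorem valFn_solSet_properties {n : ℕ} {Y : Type*} [NormedAddCommGroup Y]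
    [InnerProductSpace ℝ Y] [FiniteDimensional ℝ Y]
    (f : EuclideanSpace ℝ (Fin n) → ℝ) (g : EuclideanSpace ℝ (Fin n) → Y) (K : Set Y)
    (hfconv : ConvexOn ℝ Set.univ f) (hfcont : Continuous f) (hgcont : Continuous g)
    (hKne : K.Nonempty) (hKclosed : IsClosed K) (hKconv : Convex ℝ K)
    (hgraph : Convex ℝ (gphGK g K))
    (hcond : ∀ h : EuclideanSpace ℝ (Fin n),
      horizonFn f h ≤ (0 : EReal) → (h, (0 : Y)) ∈ recCone (gphGK g K) → h = 0) :
    -- (a)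
    (ERealProper (valFn f g K) ∧ LowerSemicontinuous (valFn f g K) ∧
      ERealConvexOn (valFn f g K) ∧
      (∀ s, valFn f g K s ≠ ⊤ →
        (solSet f g K s).Nonempty ∧ IsCompact (solSet f g K s) ∧ Convex ℝ (solSet f g K s)) ∧
      (∀ s, valFn f g K s = ⊤ → solSet f g K s = ∅)) ∧
    -- (b)
    ((∀ s, IsCompact (solSet f g K s)) ∧
      {s | (solSet f g K s).Nonempty} = {s | valFn f g K s ≠ ⊤} ∧
      (∀ (s : ℕ → Y) (shat : Y) (x : ℕ → EuclideanSpace ℝ (Fin n))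
          (xhat : EuclideanSpace ℝ (Fin n)),
        Tendsto s atTop (𝓝 shat) →
        Tendsto (fun k => valFn f g K (s k)) atTop (𝓝 (valFn f g K shat)) →
        (∀ k, x k ∈ solSet f g K (s k)) → Tendsto x atTop (𝓝 xhat) →
        xhat ∈ solSet f g K shat)) ∧
    -- (c)
    (∀ shat ∈ interior {s | valFn f g K s ≠ ⊤},
      (∃ V ∈ 𝓝 shat, Bornology.IsBounded (⋃ s ∈ V, solSet f g K s)) ∧
      (∀ (s : ℕ → Y) (x : ℕ → EuclideanSpace ℝ (Fin n)) (xhat : EuclideanSpace ℝ (Fin n)),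
        (∀ k, s k ∈ interior {s' | valFn f g K s' ≠ ⊤}) →
        Tendsto s atTop (𝓝 shat) →
        (∀ k, x k ∈ solSet f g K (s k)) → Tendsto x atTop (𝓝 xhat) →
        xhat ∈ solSet f g K shat)) := by
  have hnebot : ∀ s, valFn f g K s ≠ ⊥ :=
    valFn_ne_bot hfconv hfcont hgcont hKclosed hgraph hcond
  have hconv : ERealConvexOn (valFn f g K) :=
    valFn_convexOn hfconv hfcont hgcont hKclosed hgraph hcond
  have hproper : ERealProper (valFn f g K) := by
    refine ⟨hnebot, ?_⟩
    obtain ⟨y₀, hy₀⟩ := hKne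
    exact ⟨y₀ - g 0, valFn_ne_top_iff.2 ⟨0, by simpa using hy₀⟩⟩
  have hok : ∀ s, valFn f g K s ≠ ⊤ →
      (solSet f g K s).Nonempty ∧ IsCompact (solSet f g K s) ∧ Convex ℝ (solSet f g K s) := by
    intro s hs
    obtain ⟨xm, hxm, hv⟩ := exists_sol hfconv hfcont hgcont hKclosed hgraph hcond
      (valFn_ne_top_iff.1 hs)
    refine ⟨⟨xm, hxm⟩, ?_, solSet_convex hfconv hgraph s⟩
    rw [solSet_eq_sublevel hxm]
    exact Metric.isCompact_of_isClosed_isBounded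
      ((feas_isClosed hgcont hKclosed s).inter (isClosed_le hfcont continuous_const))
      ((key_bounded hfconv hfcont hgcont hKclosed hgraph hcond (f xm) ‖s‖).subset
        fun x hx => ⟨hx.2, s, le_rfl, hx.1⟩)
  have hempty : ∀ s, valFn f g K s = ⊤ → solSet f g K s = ∅ := by
    intro s hs
    rw [Set.eq_empty_iff_forall_notMem]
    intro x hx
    exact EReal.coe_ne_top (f x) ((valFn_eq_of_sol hx).symm.trans hs)
  have hcompact : ∀ s, IsCompact (solSet f g K s) := by
    intro s
    by_cases hs : valFn f g K s = ⊤
    · rw [hempty s hs]; exact isCompact_empty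
    · exact (hok s hs).2.1
  have hdom : {s | (solSet f g K s).Nonempty} = {s | valFn f g K s ≠ ⊤} := by
    ext s
    simp only [Set.mem_setOf_eq]
    constructor
    · rintro ⟨x, hx⟩ hs
      exact Set.eq_empty_iff_forall_notMem.1 (hempty s hs) x hx
    · intro hs; exact (hok s hs).1
  have hosc : ∀ (sq : ℕ → Y) (shat : Y) (xq : ℕ → EuclideanSpace ℝ (Fin n))
      (xhat : EuclideanSpace ℝ (Fin n)), Tendsto sq atTop (𝓝 shat) →
      Tendsto (fun k => valFn f g K (sq k)) atTop (𝓝 (valFn f g K shat)) →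
      (∀ k, xq k ∈ solSet f g K (sq k)) → Tendsto xq atTop (𝓝 xhat) →
      xhat ∈ solSet f g K shat := by
    intro sq shat xq xhat hslim hνlim hsol hxlim
    have hfeas : g xhat + shat ∈ K :=
      (gphGK_isClosed hgcont hKclosed).mem_of_tendsto (hxlim.prodMk_nhds hslim)
        (Filter.Eventually.of_forall fun k => (hsol k).1)
    have hflim : Tendsto (fun k => ((f (xq k) : ℝ) : EReal)) atTop (𝓝 ((f xhat : ℝ) : EReal)) :=
      EReal.tendsto_coe.2 ((hfcont.tendsto _).comp hxlim)
    have hfun : (fun k => valFn f g K (sq k)) = fun k => ((f (xq k) : ℝ) : EReal) :=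
      funext fun k => valFn_eq_of_sol (hsol k)
    rw [hfun] at hνlim
    have hveq : valFn f g K shat = ((f xhat : ℝ) : EReal) := tendsto_nhds_unique hνlim hflim
    refine ⟨hfeas, fun x' hx' => ?_⟩
    have h2 : valFn f g K shat ≤ ((f x' : ℝ) : EReal) := sInf_le ⟨x', hx', rfl⟩
    rw [hveq] at h2
    exact EReal.coe_le_coe_iff.1 h2
  -- part (c) preparation
  have hμeq : ∀ s, valFn f g K s ≠ ⊤ →
      valFn f g K s = (((valFn f g K s).toReal : ℝ) : EReal) :=
    fun s hs => (EReal.coe_toReal hs (hnebot s)).symm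
  set μ : Y → ℝ := fun s => (valFn f g K s).toReal with hμdef
  have hDconv : Convex ℝ {s | valFn f g K s ≠ ⊤} := by
    intro s₁ h₁ s₂ h₂ a b ha hb hab
    obtain ⟨x₁, hx₁⟩ := valFn_ne_top_iff.1 h₁
    obtain ⟨x₂, hx₂⟩ := valFn_ne_top_iff.1 h₂
    exact valFn_ne_top_iff.2 ⟨a • x₁ + b • x₂,
      hgraph (show ((x₁, s₁) : EuclideanSpace ℝ (Fin n) × Y) ∈ gphGK g K from hx₁)
        (show ((x₂, s₂) : EuclideanSpace ℝ (Fin n) × Y) ∈ gphGK g K from hx₂) ha hb hab⟩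
  have hμconv : ConvexOn ℝ {s | valFn f g K s ≠ ⊤} μ := by
    refine ⟨hDconv, fun s₁ h₁ s₂ h₂ a b ha hb hab => ?_⟩
    have hp₁ : valFn f g K s₁ ≤ ((μ s₁ : ℝ) : EReal) := (hμeq s₁ h₁).le
    have hp₂ : valFn f g K s₂ ≤ ((μ s₂ : ℝ) : EReal) := (hμeq s₂ h₂).le
    have hmem := hconv (show ((s₁, μ s₁) : Y × ℝ) ∈ _ from hp₁)
      (show ((s₂, μ s₂) : Y × ℝ) ∈ _ from hp₂) ha hb hab
    have hmem' : valFn f g K (a • s₁ + b • s₂) ≤ ((a • μ s₁ + b • μ s₂ : ℝ) : EReal) := hmem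
    have hne : valFn f g K (a • s₁ + b • s₂) ≠ ⊤ := hDconv h₁ h₂ ha hb hab
    have hfinal : ((μ (a • s₁ + b • s₂) : ℝ) : EReal) ≤ ((a • μ s₁ + b • μ s₂ : ℝ) : EReal) := by
      rw [← hμeq _ hne]; exact hmem'
    exact EReal.coe_le_coe_iff.1 hfinal
  have hμcont : ContinuousOn μ (interior {s | valFn f g K s ≠ ⊤}) :=
    (hμconv.subset interior_subset hDconv.interior).continuousOn isOpen_interior
  refine ⟨⟨hproper, valFn_lsc hfconv hfcont hgcont hKclosed hgraph hcond, hconv, hok, hempty⟩,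
    ⟨hcompact, hdom, hosc⟩, ?_⟩
  intro shat hshat
  have hμat : ContinuousAt μ shat := hμcont.continuousAt (isOpen_interior.mem_nhds hshat)
  constructor
  · -- local boundedness
    have hev : ∀ᶠ s' in 𝓝 shat, μ s' < μ shat + 1 := hμat.eventually_lt_const (lt_add_one (μ shat))
    refine ⟨{s' | μ s' < μ shat + 1} ∩ Metric.ball shat 1 ∩ interior {s | valFn f g K s ≠ ⊤},
      Filter.inter_mem (Filter.inter_mem hev (Metric.ball_mem_nhds shat one_pos))
        (isOpen_interior.mem_nhds hshat), ?_⟩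
    refine (key_bounded hfconv hfcont hgcont hKclosed hgraph hcond
      (μ shat + 1) (‖shat‖ + 1)).subset ?_
    rintro x hx
    simp only [Set.mem_iUnion] at hx
    obtain ⟨s', hs', hxs⟩ := hx
    obtain ⟨⟨hμs, hball⟩, hsD⟩ := hs'
    have hval : valFn f g K s' = ((f x : ℝ) : EReal) := valFn_eq_of_sol hxs
    have hfμ : f x = μ s' := by
      simp only [hμdef]; rw [hval, EReal.toReal_coe]
    have h3 : ‖s' - shat‖ < 1 := by
      rw [← dist_eq_norm]; exact Metric.mem_ball.1 hball
    refine ⟨by rw [hfμ]; exact hμs.le, s', ?_, hxs.1⟩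
    calc ‖s'‖ = ‖s' - shat + shat‖ := by rw [sub_add_cancel]
      _ ≤ ‖s' - shat‖ + ‖shat‖ := norm_add_le _ _
      _ ≤ ‖shat‖ + 1 := by linarith
  · -- outer semicontinuity relative to the interior of the domain
    intro sq xq xhat hsqD hslim hsol hxlim
    have hfeas : g xhat + shat ∈ K :=
      (gphGK_isClosed hgcont hKclosed).mem_of_tendsto (hxlim.prodMk_nhds hslim)
        (Filter.Eventually.of_forall fun k => (hsol k).1)
    have hμlim : Tendsto (fun k => μ (sq k)) atTop (𝓝 (μ shat)) := hμat.tendsto.comp hslim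
    have hfeq : (fun k => μ (sq k)) = fun k => f (xq k) := by
      funext k
      simp only [hμdef]; rw [valFn_eq_of_sol (hsol k), EReal.toReal_coe]
    rw [hfeq] at hμlim
    have hflim : Tendsto (fun k => f (xq k)) atTop (𝓝 (f xhat)) := (hfcont.tendsto _).comp hxlim
    have hfxhat : f xhat = μ shat := tendsto_nhds_unique hflim hμlim
    refine ⟨hfeas, fun x' hx' => ?_⟩
    have h2 : valFn f g K shat ≤ ((f x' : ℝ) : EReal) := sInf_le ⟨x', hx', rfl⟩
    rw [hμeq shat (interior_subset hshat)] at h2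
    rw [hfxhat]
    exact EReal.coe_le_coe_iff.1 h2
end
end

section
/- Suppose dom θ ≠ ∅ and the set of feasible shifts S is closed. Then the following two properties are equivalent: (i) the problem (P): minimize f(x) subject to g(x) ∈ K, is feasible (i.e., 0 ∈ S); (ii) the dual function θ is bounded below on Y. -/
open Set Filter Topology Bornology Metric
open scoped RealInnerProductSpace

noncomputable section

variable {E : Type*} [NormedAddCommGroup E] [InnerProductSpace ℝ E]
variable {Y : Type*} [NormedAddCommGroup Y] [InnerProductSpace ℝ Y]

/-- Proposition 3.1: if `dom θ ≠ ∅` and `S` is closed, then problem (P)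
is feasible iff the dual function `θ` is bounded below. -/
theorem feasible_iff_dualFn_bddBelow {n : ℕ} {Y : Type*} [NormedAddCommGroup Y]
    [InnerProductSpace ℝ Y] [FiniteDimensional ℝ Y]
    (f : EuclideanSpace ℝ (Fin n) → ℝ) (g : EuclideanSpace ℝ (Fin n) → Y) (K : Set Y)
    (hfconv : ConvexOn ℝ Set.univ f)
    (hKne : K.Nonempty) (hKclosed : IsClosed K) (hKconv : Convex ℝ K)
    (hgraph : Convex ℝ (gphGK g K))
    (hdom : ∃ l, dualFn f g K l ≠ ⊤)
    (hSclosed : IsClosed (feasShifts g K)) :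
    (∃ x, g x ∈ K) ↔ ∃ c : ℝ, ∀ l, (c : EReal) ≤ dualFn f g K l := by
  constructor
  · rintro ⟨x₀, hx₀⟩
    refine ⟨-f x₀, fun l => ?_⟩
    have h1 : sInf ((fun p : EuclideanSpace ℝ (Fin n) × Y =>
        ((lagr f g p.1 p.2 l : ℝ) : EReal)) '' {p | p.2 ∈ K}) ≤ ((f x₀ : ℝ) : EReal) := by
      apply sInf_le
      exact ⟨(x₀, g x₀), hx₀, by simp [lagr]⟩
    rw [dualFn, show ((-f x₀ : ℝ) : EReal) = -((f x₀ : ℝ) : EReal) by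
      rw [EReal.coe_neg]]
    exact EReal.neg_le_neg_iff.mpr h1
  · rintro ⟨c, hc⟩
    by_contra hfeas
    -- S is convex
    have hSeq : feasShifts g K = Prod.snd '' (gphGK g K) := by
      ext s
      constructor
      · rintro ⟨x, hx⟩; exact ⟨(x, s), hx, rfl⟩
      · rintro ⟨⟨x, s'⟩, hp, rfl⟩; exact ⟨x, hp⟩
    have hSconv : Convex ℝ (feasShifts g K) := by
      rw [hSeq]
      exact hgraph.linear_image (LinearMap.snd ℝ _ _)
    have h0S : (0 : Y) ∉ feasShifts g K := by
      rintro ⟨x, hx⟩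
      exact hfeas ⟨x, by simpa using hx⟩
    obtain ⟨φ, u, hφ0, hφ⟩ := geometric_hahn_banach_point_closed hSconv hSclosed h0S
    have hu : 0 < u := by simpa using hφ0
    set lam0 : Y := (InnerProductSpace.toDual ℝ Y).symm φ with hlam0
    have hlameq : ∀ b : Y, ⟪lam0, b⟫ = φ b := fun b =>
      InnerProductSpace.toDual_symm_apply
    obtain ⟨l, hl⟩ := hdom
    have hlbot : dualFn f g K l ≠ ⊥ := by
      intro h
      have := hc l
      rw [h] at this
      exact absurd this (by simp)
    obtain ⟨M, hM⟩ : ∃ M : ℝ, dualFn f g K l = (M : EReal) := by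
      lift dualFn f g K l to ℝ using ⟨hl, hlbot⟩ with M hM
      exact ⟨M, rfl⟩
    have hsInf : sInf ((fun p : EuclideanSpace ℝ (Fin n) × Y =>
        ((lagr f g p.1 p.2 l : ℝ) : EReal)) '' {p | p.2 ∈ K}) = ((-M : ℝ) : EReal) := by
      have := hM
      rw [dualFn] at this
      rw [EReal.coe_neg, ← this, neg_neg]
    set t : ℝ := max 0 ((M - c + 1) / u) with ht
    have ht0 : 0 ≤ t := le_max_left _ _
    have htu : M - t * u ≤ c - 1 := by
      have h1 : (M - c + 1) / u ≤ t := le_max_right _ _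
      have h2 : M - c + 1 ≤ t * u := by
        rw [div_le_iff₀ hu] at h1; linarith
      linarith
    -- lower bound on the Lagrangian for the shifted multiplier
    have key : ∀ p : EuclideanSpace ℝ (Fin n) × Y, p.2 ∈ K →
        (-M + t * u : ℝ) ≤ lagr f g p.1 p.2 (l - t • lam0) := by
      rintro ⟨x, y⟩ hy
      have hsS : (y - g x) ∈ feasShifts g K := ⟨x, by simpa using hy⟩
      have hsep : u < ⟪lam0, y - g x⟫ := by rw [hlameq]; exact hφ _ hsS
      have hlag : (-M : ℝ) ≤ lagr f g x y l := by
        have hle : sInf ((fun p : EuclideanSpace ℝ (Fin n) × Y =>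
            ((lagr f g p.1 p.2 l : ℝ) : EReal)) '' {p | p.2 ∈ K}) ≤
            ((lagr f g x y l : ℝ) : EReal) := sInf_le ⟨(x, y), hy, rfl⟩
        rw [hsInf] at hle
        exact_mod_cast hle
      have hexp : lagr f g x y (l - t • lam0)
          = lagr f g x y l + t * ⟪lam0, y - g x⟫ := by
        simp only [lagr, inner_sub_left, inner_smul_left, RCLike.ofReal_real_eq_id, id_eq]
        have h3 : ⟪lam0, g x - y⟫ = -⟪lam0, y - g x⟫ := by
          rw [← inner_neg_right, neg_sub]
        simp only [starRingEnd_apply, star_trivial]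
        rw [h3]; ring
      rw [hexp]
      have : t * u ≤ t * ⟪lam0, y - g x⟫ :=
        mul_le_mul_of_nonneg_left (le_of_lt hsep) ht0
      linarith
    have hbound : ((-M + t * u : ℝ) : EReal) ≤
        sInf ((fun p : EuclideanSpace ℝ (Fin n) × Y =>
        ((lagr f g p.1 p.2 (l - t • lam0) : ℝ) : EReal)) '' {p | p.2 ∈ K}) := by
      apply le_sInf
      rintro b ⟨⟨x, y⟩, hy, rfl⟩
      show ((-M + t * u : ℝ) : EReal) ≤ ((lagr f g x y (l - t • lam0) : ℝ) : EReal)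
      exact_mod_cast key (x, y) hy
    have hθ : dualFn f g K (l - t • lam0) ≤ ((M - t * u : ℝ) : EReal) := by
      rw [dualFn, show ((M - t * u : ℝ) : EReal) = -((-M + t * u : ℝ) : EReal) by
        rw [← EReal.coe_neg]; congr 1; ring]
      exact EReal.neg_le_neg_iff.mpr hbound
    have hcle : (c : EReal) ≤ ((M - t * u : ℝ) : EReal) :=
      le_trans (hc (l - t • lam0)) hθ
    have : c ≤ M - t * u := by exact_mod_cast hcle
    linarith
end
end

section
/- Let ν be the optimal value function of the shifted problems and θ the dual function. Then: (a) θ(λ) = ν*(λ) for all λ ∈ Y, and ν**(s) = θ*(s) for all s ∈ Y; (b) if ν is proper (ν(s) > −∞ for all s ∈ S and ν(ŝ) < +∞ for some ŝ ∈ S), then θ and ν** are proper lower semi-continuous convex functions; (c) if ν is a proper lower semi-continuous function, then ν(s) = ν**(s) = θ*(s) for every s ∈ Y. -/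
open Set Filter Topology Bornology Metric
open scoped RealInnerProductSpace

noncomputable section

variable {E : Type*} [NormedAddCommGroup E] [InnerProductSpace ℝ E]
variable {Y : Type*} [NormedAddCommGroup Y] [InnerProductSpace ℝ Y]

/-! The change of variables `s = y - g x` identifies both `θ λ` and `ν* λ` with
`sup {⟪λ, y - g x⟫ - f x | x, y ∈ K}`, which gives (a). Graph-convexity of `G_K` and convexity
of `f` make `ν` convex. In finite dimension the epigraph of a proper convex function has a
relative-interior point, so it admits a non-vertical supporting hyperplane, i.e. an affine
minorant; this keeps `ν* = θ` and `ν**` away from `⊥`, while conjugates are always lsc and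
convex, hence (b). Part (c) is the Fenchel–Moreau theorem: every point strictly below the closed
epigraph is separated from it by a hyperplane, and a vertical one is tilted by adding a large
multiple of it to an affine minorant. -/

theorem EReal.coe_sub_le_comm {c : ℝ} {x y : EReal} :
    (c : EReal) - x ≤ y ↔ (c : EReal) - y ≤ x := by
  induction x using EReal.rec <;> induction y using EReal.rec <;>
    simp only [EReal.sub_top, EReal.coe_sub_bot, ← EReal.coe_sub, EReal.coe_le_coe_iff, le_top,
      bot_le, EReal.coe_ne_bot, EReal.coe_ne_top, le_bot_iff, top_le_iff]
  exact sub_le_comm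

theorem Convex.exists_openSegment_closure_subset {F : Type*} [NormedAddCommGroup F]
    [NormedSpace ℝ F] [FiniteDimensional ℝ F] {C : Set F} (hC : Convex ℝ C) (hne : C.Nonempty) :
    ∃ z ∈ C, ∀ y ∈ closure C, openSegment ℝ z y ⊆ C := by
  obtain ⟨p, hp⟩ := hne
  -- `C - p` has nonempty interior inside its span `V`.
  set V := Submodule.span ℝ ((· - p) '' C)
  set C' : Set V := (↑) ⁻¹' ((· - p) '' C)
  have hmem : ∀ v : V, v ∈ C' ↔ (v : F) + p ∈ C := fun v => by
    simp [C', sub_eq_iff_eq_add]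
  have hC' : Convex ℝ C' := by
    have hCp : Convex ℝ ((· - p) '' C) := by
      simpa only [sub_eq_neg_add] using hC.translate (-p)
    exact hCp.linear_preimage V.subtype
  have h0 : (0 : V) ∈ C' := by simpa [hmem] using hp
  have hspan : affineSpan ℝ C' = ⊤ := by
    rw [AffineSubspace.affineSpan_eq_top_iff_vectorSpan_eq_top_of_nonempty ℝ V V ⟨0, h0⟩,
      vectorSpan_eq_span_vsub_set_right ℝ h0]
    simp only [vsub_eq_sub, sub_zero, image_id']
    exact Submodule.span_span_coe_preimage
  obtain ⟨z, hz⟩ := hC'.interior_nonempty_iff_affineSpan_eq_top.2 hspan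
  refine ⟨z + p, (hmem z).1 (interior_subset hz), fun y hy => ?_⟩
  have hyp : y - p ∈ closure ((· - p) '' C) :=
    map_mem_closure (f := (· - p)) (continuous_sub_right p) hy fun x hx => mem_image_of_mem _ hx
  have hyV : y - p ∈ V :=
    closure_minimal Submodule.subset_span V.closed_of_finiteDimensional hyp
  have hy' : (⟨y - p, hyV⟩ : V) ∈ closure C' := by
    have hC'_image : Subtype.val '' C' = (· - p) '' C :=
      image_preimage_eq_of_subset (by rw [Subtype.range_coe_subtype]; exact Submodule.subset_span)
    rw [Topology.IsInducing.subtypeVal.closure_eq_preimage_closure_image, mem_preimage]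
    convert hyp using 2
    exact hC'_image
  rintro _ ⟨a, b, ha, hb, hab, rfl⟩
  have hmid := interior_subset
    (hC'.openSegment_interior_closure_subset_interior hz hy' ⟨a, b, ha, hb, hab, rfl⟩)
  rw [hmem] at hmid
  convert hmid using 1
  simp only [Submodule.coe_add, Submodule.coe_smul, smul_sub]
  obtain rfl : a = 1 - b := by linarith
  module

theorem LowerSemicontinuous.isClosed_realEpigraph {α : Type*} [TopologicalSpace α]
    {h : α → EReal} (hh : LowerSemicontinuous h) : IsClosed {p : α × ℝ | h p.1 ≤ p.2} :=
  hh.isClosed_epigraph.preimage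
    (continuous_fst.prodMk (continuous_coe_real_ereal.comp continuous_snd))

theorem ContinuousLinearMap.exists_inner_add_mul [CompleteSpace Y] (φ : Y × ℝ →L[ℝ] ℝ) :
    ∃ v : Y, ∀ s r, φ (s, r) = ⟪v, s⟫ + r * φ (0, 1) := by
  refine ⟨(InnerProductSpace.toDual ℝ Y).symm (φ.comp (ContinuousLinearMap.inl ℝ Y ℝ)),
    fun s r => ?_⟩
  rw [InnerProductSpace.toDual_symm_apply, ← smul_eq_mul, ← map_smul,
    ContinuousLinearMap.comp_apply, ContinuousLinearMap.inl_apply, ← map_add]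
  simp

def IsAffineMinorant (h : Y → EReal) (w : Y) (b : ℝ) : Prop :=
  ∀ s, ((⟪w, s⟫ - b : ℝ) : EReal) ≤ h s

section Conjugate

variable {h : Y → EReal}

theorem le_econj (h : Y → EReal) (l s : Y) : (⟪l, s⟫ : EReal) - h s ≤ econj h l :=
  le_iSup (fun s => (⟪l, s⟫ : EReal) - h s) s

theorem econj_le_of_isAffineMinorant {w : Y} {b : ℝ} (hmin : IsAffineMinorant h w b) :
    econj h w ≤ b :=
  iSup_le fun s => EReal.coe_sub_le_comm.1 (by exact_mod_cast hmin s)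

theorem econj_econj_le (h : Y → EReal) (s : Y) : econj (econj h) s ≤ h s :=
  iSup_le fun l => EReal.coe_sub_le_comm.1 (real_inner_comm s l ▸ le_econj h l s)

theorem IsAffineMinorant.econj_econj {w : Y} {b : ℝ} (hmin : IsAffineMinorant h w b) :
    IsAffineMinorant (econj (econj h)) w b := fun s =>
  calc ((⟪w, s⟫ - b : ℝ) : EReal) ≤ (⟪s, w⟫ : EReal) - econj h w := by
        rw [real_inner_comm, EReal.coe_sub]
        exact EReal.sub_le_sub le_rfl (econj_le_of_isAffineMinorant hmin)
    _ ≤ econj (econj h) s := le_econj (econj h) s w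

theorem lowerSemicontinuous_econj (h : Y → EReal) : LowerSemicontinuous (econj h) := by
  refine lowerSemicontinuous_iSup fun s => Continuous.lowerSemicontinuous ?_
  simp_rw [sub_eq_add_neg]
  refine continuous_iff_continuousAt.2 fun l =>
    (EReal.continuousAt_add (Or.inl (EReal.coe_ne_top _)) (Or.inl (EReal.coe_ne_bot _))).comp
      (f := fun l => ((⟪l, s⟫ : EReal), -h s)) ?_
  exact ((continuous_coe_real_ereal.comp (continuous_id.inner continuous_const)).prodMk
    continuous_const).continuousAt

theorem erealConvexOn_econj (h : Y → EReal) : ERealConvexOn (econj h) := by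
  have hepi : {p : Y × ℝ | econj h p.1 ≤ p.2} = ⋂ s,
      ((innerₗ Y s).comp (LinearMap.fst ℝ Y ℝ) - LinearMap.snd ℝ Y ℝ) ⁻¹'
        {t : ℝ | (t : EReal) ≤ h s} := by
    ext p
    simp only [mem_ofPred_eq, econj, iSup_le_iff, mem_iInter, mem_preimage, LinearMap.sub_apply,
      LinearMap.comp_apply, LinearMap.fst_apply, LinearMap.snd_apply, innerₗ_apply_apply,
      EReal.coe_sub, real_inner_comm p.1]
    exact forall_congr' fun s => EReal.coe_sub_le_comm
  unfold ERealConvexOn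
  rw [hepi]
  exact convex_iInter fun s =>
    (ordConnected_Iic.preimage_mono EReal.coe_strictMono.monotone).convex.linear_preimage _

end Conjugate

section Separation

variable {h : Y → EReal} {v : Y} {a u : ℝ}

theorem exists_isAffineMinorant_of_separation (ha : 0 < a)
    (hsep : ∀ s (r : ℝ), h s ≤ r → u < ⟪v, s⟫ + r * a) :
    ∃ w b, IsAffineMinorant h w b ∧ ∀ s (r : ℝ), ⟪v, s⟫ + r * a < u → r < ⟪w, s⟫ - b := by
  have hval : ∀ s, ⟪-a⁻¹ • v, s⟫ - -(u / a) = (u - ⟪v, s⟫) / a := fun s => by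
    rw [real_inner_smul_left]
    field_simp
    ring
  refine ⟨-a⁻¹ • v, -(u / a), fun s => EReal.le_of_forall_lt_iff_le.1 fun r hr => ?_,
    fun s r hr => ?_⟩
  · rw [hval, EReal.coe_le_coe_iff, div_le_iff₀ ha]
    linarith [hsep s r hr.le]
  · rw [hval, lt_div_iff₀ ha]
    linarith

theorem nonneg_of_separation (hh : ∃ s, h s ≠ ⊤)
    (hsep : ∀ s (r : ℝ), h s ≤ r → u < ⟪v, s⟫ + r * a) : 0 ≤ a := by
  obtain ⟨s, hs⟩ := hh
  by_contra! ha
  set r := max (h s).toReal ((u - ⟪v, s⟫) / a)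
  have hra : r * a ≤ u - ⟪v, s⟫ := by
    have := mul_le_mul_of_nonpos_right (le_max_right (h s).toReal ((u - ⟪v, s⟫) / a)) ha.le
    rwa [div_mul_cancel₀ _ ha.ne] at this
  have := hsep s r ((EReal.le_coe_toReal hs).trans (EReal.coe_le_coe_iff.2 (le_max_left _ _)))
  linarith

theorem exists_isAffineMinorant_gt_of_vertical {w₀ : Y} {b₀ : ℝ}
    (hmin : IsAffineMinorant h w₀ b₀) (hdom : ∀ s (r : ℝ), h s ≤ r → u < ⟪v, s⟫)
    {s : Y} (hs : ⟪v, s⟫ < u) (r : ℝ) : ∃ w b, IsAffineMinorant h w b ∧ r < ⟪w, s⟫ - b := by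
  have hδ : 0 < u - ⟪v, s⟫ := sub_pos.2 hs
  set c := (|r - (⟪w₀, s⟫ - b₀)| + 1) / (u - ⟪v, s⟫)
  have hval : ∀ s', ⟪w₀ - c • v, s'⟫ - (b₀ - c * u) = ⟪w₀, s'⟫ - b₀ + c * (u - ⟪v, s'⟫) :=
    fun s' => by rw [inner_sub_left, real_inner_smul_left]; ring
  refine ⟨w₀ - c • v, b₀ - c * u, fun s' => EReal.le_of_forall_lt_iff_le.1 fun z hz => ?_, ?_⟩
  · have hz₀ : ⟪w₀, s'⟫ - b₀ < z := EReal.coe_lt_coe_iff.1 ((hmin s').trans_lt hz)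
    have hc : 0 ≤ c := div_nonneg (by positivity) hδ.le
    rw [hval, EReal.coe_le_coe_iff]
    nlinarith [hdom s' z hz.le]
  · rw [hval, div_mul_cancel₀ _ hδ.ne']
    linarith [le_abs_self (r - (⟪w₀, s⟫ - b₀))]

end Separation

section FiniteDimensional

variable [FiniteDimensional ℝ Y] {h : Y → EReal}

theorem ERealProper.exists_isAffineMinorant (hconv : ERealConvexOn h) (hh : ERealProper h) :
    ∃ w b, IsAffineMinorant h w b := by
  have := FiniteDimensional.complete ℝ Y
  set C := {p : Y × ℝ | h p.1 ≤ p.2}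
  obtain ⟨s₀, hs₀⟩ := hh.2
  obtain ⟨z, hzC, hz⟩ := Convex.exists_openSegment_closure_subset hconv
    ⟨(s₀, (h s₀).toReal), EReal.le_coe_toReal hs₀⟩
  have hbelow : ∃ t > 0, (z.1, z.2 - t) ∉ closure C := by
    by_contra! hall
    refine hh.1 z.1 ((EReal.eq_bot_iff_forall_lt _).2 fun y => ?_)
    set t := 2 * |z.2 - y| + 2
    have hmid : (z.1, z.2 - t / 2) ∈ C := by
      convert hz _ (hall t (by positivity))
        ⟨1 / 2, 1 / 2, by norm_num, by norm_num, by norm_num, rfl⟩ using 1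
      ext
      · simp only [Prod.fst_add, Prod.smul_fst]
        module
      · simp only [Prod.snd_add, Prod.smul_snd, smul_eq_mul]
        ring
    refine lt_of_le_of_lt hmid (EReal.coe_lt_coe_iff.2 ?_)
    linarith [le_abs_self (z.2 - y)]
  obtain ⟨t, ht, hzt⟩ := hbelow
  obtain ⟨φ, u, hφt, hφC⟩ := geometric_hahn_banach_point_closed hconv.closure isClosed_closure hzt
  obtain ⟨v, hv⟩ := φ.exists_inner_add_mul
  have hsep : ∀ s (r : ℝ), h s ≤ r → u < ⟪v, s⟫ + r * φ (0, 1) := fun s r hsr =>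
    hv s r ▸ hφC _ (subset_closure hsr)
  -- The hyperplane separates `z` from a point below it, so it is not vertical.
  have ha : 0 < φ (0, 1) := by
    have := hsep z.1 z.2 hzC
    rw [hv] at hφt
    nlinarith
  obtain ⟨w, b, hmin, -⟩ := exists_isAffineMinorant_of_separation ha hsep
  exact ⟨w, b, hmin⟩

theorem exists_isAffineMinorant_gt (hconv : ERealConvexOn h) (hh : ERealProper h)
    (hlsc : LowerSemicontinuous h) {s : Y} {r : ℝ} (hr : (r : EReal) < h s) :
    ∃ w b, IsAffineMinorant h w b ∧ r < ⟪w, s⟫ - b := by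
  have := FiniteDimensional.complete ℝ Y
  obtain ⟨φ, u, hφ, hφC⟩ := geometric_hahn_banach_point_closed hconv hlsc.isClosed_realEpigraph
    (x := (s, r)) (not_le.2 hr)
  obtain ⟨v, hv⟩ := φ.exists_inner_add_mul
  have hsep : ∀ s (r : ℝ), h s ≤ r → u < ⟪v, s⟫ + r * φ (0, 1) := fun s r hsr =>
    hv s r ▸ hφC (s, r) hsr
  rw [hv] at hφ
  rcases (nonneg_of_separation hh.2 hsep).eq_or_lt with ha | ha
  · obtain ⟨w₀, b₀, hmin⟩ := hh.exists_isAffineMinorant hconv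
    refine exists_isAffineMinorant_gt_of_vertical hmin (fun s r hsr => ?_)
      (by simpa [← ha] using hφ) r
    simpa [← ha] using hsep s r hsr
  · obtain ⟨w, b, hmin, hgt⟩ := exists_isAffineMinorant_of_separation ha hsep
    exact ⟨w, b, hmin, hgt s r hφ⟩

theorem econj_econj_eq_self (hconv : ERealConvexOn h) (hh : ERealProper h)
    (hlsc : LowerSemicontinuous h) : econj (econj h) = h := by
  funext s
  refine le_antisymm (econj_econj_le h s) (not_lt.1 fun hlt => ?_)
  obtain ⟨r, hr, hrs⟩ := EReal.exists_between_coe_real hlt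
  obtain ⟨w, b, hmin, hgt⟩ := exists_isAffineMinorant_gt hconv hh hlsc hrs
  exact lt_asymm (EReal.coe_lt_coe_iff.2 hgt) ((hmin.econj_econj s).trans_lt hr)

theorem erealProper_econj (hconv : ERealConvexOn h) (hh : ERealProper h) :
    ERealProper (econj h) := by
  obtain ⟨w, b, hmin⟩ := hh.exists_isAffineMinorant hconv
  obtain ⟨s₀, hs₀⟩ := hh.2
  refine ⟨fun l => ne_bot_of_le_ne_bot ?_ (le_econj h l s₀),
    w, ne_top_of_le_ne_top (EReal.coe_ne_top b) (econj_le_of_isAffineMinorant hmin)⟩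
  rw [sub_eq_add_neg, Ne, EReal.add_eq_bot_iff, EReal.neg_eq_bot_iff]
  simpa using hs₀

end FiniteDimensional

section ShiftedProblem

variable {X : Type*} {f : X → ℝ} {g : X → Y} {K : Set Y}

theorem neg_lagr (x : X) (y l : Y) : -lagr f g x y l = ⟪l, y - g x⟫ - f x := by
  rw [lagr, inner_sub_right, inner_sub_right]
  ring

theorem le_dualFn {x : X} {y : Y} (hy : y ∈ K) (l : Y) :
    ((⟪l, y - g x⟫ - f x : ℝ) : EReal) ≤ dualFn f g K l := by
  rw [dualFn, EReal.le_neg, ← neg_lagr, EReal.coe_neg, neg_neg]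
  exact sInf_le ⟨(x, y), hy, rfl⟩

theorem dualFn_le {l : Y} {c : EReal}
    (hc : ∀ x, ∀ y ∈ K, ((⟪l, y - g x⟫ - f x : ℝ) : EReal) ≤ c) : dualFn f g K l ≤ c := by
  rw [dualFn, EReal.neg_le]
  refine le_sInf ?_
  rintro _ ⟨⟨x, y⟩, hy, rfl⟩
  rw [EReal.neg_le, ← EReal.coe_neg, neg_lagr]
  exact hc x y hy

theorem dualFn_eq_econj_valFn : dualFn f g K = econj (valFn f g K) := by
  funext l
  refine le_antisymm (dualFn_le fun x y hy => ?_) (iSup_le fun s => ?_)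
  · have hfeas : g x + (y - g x) ∈ K := by rwa [add_sub_cancel]
    calc ((⟪l, y - g x⟫ - f x : ℝ) : EReal)
        ≤ (⟪l, y - g x⟫ : EReal) - valFn f g K (y - g x) := by
          rw [EReal.coe_sub]
          exact EReal.sub_le_sub le_rfl (sInf_le (mem_image_of_mem _ hfeas))
      _ ≤ econj (valFn f g K) l := le_econj _ l _
  · refine EReal.coe_sub_le_comm.1 (le_sInf ?_)
    rintro _ ⟨x, hx, rfl⟩
    refine EReal.coe_sub_le_comm.1 ?_
    have := le_dualFn (f := f) (g := g) (x := x) hx l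
    rwa [add_sub_cancel_left, EReal.coe_sub] at this

theorem erealConvexOn_valFn [AddCommGroup X] [Module ℝ X] (hf : ConvexOn ℝ univ f)
    (hgraph : Convex ℝ (gphGK g K)) : ERealConvexOn (valFn f g K) := by
  have exists_lt_of_valFn_lt {s : Y} {c : ℝ} (hc : valFn f g K s < c) :
      ∃ x, g x + s ∈ K ∧ f x < c := by
    obtain ⟨_, ⟨x, hx, rfl⟩, hlt⟩ := sInf_lt_iff.1 hc
    exact ⟨x, hx, EReal.coe_lt_coe_iff.1 hlt⟩
  rintro ⟨s₁, t₁⟩ h₁ ⟨s₂, t₂⟩ h₂ a b ha hb hab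
  refine EReal.le_of_forall_lt_iff_le.1 fun r hr => ?_
  simp only [Prod.smul_mk, Prod.mk_add_mk, smul_eq_mul, EReal.coe_lt_coe_iff] at hr ⊢
  set ε := r - (a * t₁ + b * t₂)
  have hε : 0 < ε := sub_pos.2 hr
  obtain ⟨x₁, hx₁, hfx₁⟩ :=
    exists_lt_of_valFn_lt (h₁.trans_lt (by exact_mod_cast lt_add_of_pos_right t₁ hε))
  obtain ⟨x₂, hx₂, hfx₂⟩ :=
    exists_lt_of_valFn_lt (h₂.trans_lt (by exact_mod_cast lt_add_of_pos_right t₂ hε))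
  have hfeas : g (a • x₁ + b • x₂) + (a • s₁ + b • s₂) ∈ K :=
    hgraph (show (x₁, s₁) ∈ gphGK g K from hx₁) (show (x₂, s₂) ∈ gphGK g K from hx₂) ha hb hab
  calc valFn f g K (a • s₁ + b • s₂) ≤ f (a • x₁ + b • x₂) := sInf_le (mem_image_of_mem _ hfeas)
    _ ≤ (a * f x₁ + b * f x₂ : ℝ) :=
      EReal.coe_le_coe_iff.2 (hf.2 (mem_univ _) (mem_univ _) ha hb hab)
    _ ≤ r := by
      rw [EReal.coe_le_coe_iff]
      nlinarith

end ShiftedProblem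

theorem dualFn_eq_conj_valFn_general {n : ℕ} {Y : Type*} [NormedAddCommGroup Y]
    [InnerProductSpace ℝ Y] [FiniteDimensional ℝ Y]
    (f : EuclideanSpace ℝ (Fin n) → ℝ) (g : EuclideanSpace ℝ (Fin n) → Y) (K : Set Y)
    (hfconv : ConvexOn ℝ Set.univ f)
    (hgraph : Convex ℝ (gphGK g K)) :
    -- (a)
    ((∀ l, dualFn f g K l = econj (valFn f g K) l) ∧
      (∀ s, econj (econj (valFn f g K)) s = econj (dualFn f g K) s)) ∧
    -- (b)
    (ERealProper (valFn f g K) →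
      (ERealProper (dualFn f g K) ∧ LowerSemicontinuous (dualFn f g K) ∧
        ERealConvexOn (dualFn f g K)) ∧
      (ERealProper (econj (econj (valFn f g K))) ∧
        LowerSemicontinuous (econj (econj (valFn f g K))) ∧
        ERealConvexOn (econj (econj (valFn f g K))))) ∧
    -- (c)
    (ERealProper (valFn f g K) → LowerSemicontinuous (valFn f g K) →
      ∀ s, valFn f g K s = econj (econj (valFn f g K)) s ∧
        valFn f g K s = econj (dualFn f g K) s) := by
  have hconv : ERealConvexOn (valFn f g K) := erealConvexOn_valFn hfconv hgraph
  rw [dualFn_eq_econj_valFn]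
  refine ⟨⟨fun _ => rfl, fun _ => rfl⟩, fun hν => ?_, fun hν hlsc s => ?_⟩
  · have hν' := erealProper_econj hconv hν
    exact ⟨⟨hν', lowerSemicontinuous_econj _, erealConvexOn_econj _⟩,
      erealProper_econj (erealConvexOn_econj _) hν', lowerSemicontinuous_econj _,
      erealConvexOn_econj _⟩
  · rw [econj_econj_eq_self hconv hν hlsc]
    exact ⟨rfl, rfl⟩

/-- Proposition 3.2: (a) `θ = ν*` and `ν** = θ*`; (b) if `ν` is proper
then `θ` and `ν**` are proper lsc convex; (c) if `ν` is proper and lsc then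
`ν = ν** = θ*`. -/
theorem dualFn_eq_conj_valFn {n : ℕ} {Y : Type*} [NormedAddCommGroup Y]
    [InnerProductSpace ℝ Y] [FiniteDimensional ℝ Y]
    (f : EuclideanSpace ℝ (Fin n) → ℝ) (g : EuclideanSpace ℝ (Fin n) → Y) (K : Set Y)
    (hfconv : ConvexOn ℝ Set.univ f)
    (hKne : K.Nonempty) (hKclosed : IsClosed K) (hKconv : Convex ℝ K)
    (hgraph : Convex ℝ (gphGK g K)) :
    -- (a)
    ((∀ l, dualFn f g K l = econj (valFn f g K) l) ∧
      (∀ s, econj (econj (valFn f g K)) s = econj (dualFn f g K) s)) ∧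
    -- (b)
    (ERealProper (valFn f g K) →
      (ERealProper (dualFn f g K) ∧ LowerSemicontinuous (dualFn f g K) ∧
        ERealConvexOn (dualFn f g K)) ∧
      (ERealProper (econj (econj (valFn f g K))) ∧
        LowerSemicontinuous (econj (econj (valFn f g K))) ∧
        ERealConvexOn (econj (econj (valFn f g K))))) ∧
    -- (c)
    (ERealProper (valFn f g K) → LowerSemicontinuous (valFn f g K) →
      ∀ s, valFn f g K s = econj (econj (valFn f g K)) s ∧
        valFn f g K s = econj (dualFn f g K) s) :=
  dualFn_eq_conj_valFn_general f g K hfconv hgraph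
end
end

section
/- Assume s̄ ≠ 0, val(P(s̄)) ∈ ℝ, ν is lower semi-continuous at s̄, and Sol(D(s̄)) ≠ ∅. Then Sol(D(s̄)) is unbounded, and moreover −s̄ ∈ [Sol(D(s̄))]^∞, i.e., −s̄ lies in the recession cone of the closed convex set Sol(D(s̄)); in particular λ̄ − t s̄ ∈ Sol(D(s̄)) for every λ̄ ∈ Sol(D(s̄)) and every t ≥ 0. -/
open Set Filter Topology Bornology Metric
open scoped RealInnerProductSpace

noncomputable section

variable {E : Type*} [NormedAddCommGroup E] [InnerProductSpace ℝ E]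
variable {Y : Type*} [NormedAddCommGroup Y] [InnerProductSpace ℝ Y]

/-
Since `s̄` is the point of the convex set `S` nearest to the origin, `⟪s̄, s⟫ ≥ ‖s̄‖²` for all
`s ∈ S`. For `y ∈ K` the vector `y - g x` lies in `S`, so replacing `λ` by `λ - t s̄` raises every
Lagrangian value `f x + ⟪λ, g x - y⟫` by at least `t ‖s̄‖²`; hence `θ` drops by at least that much,
which is exactly what the linear term `⟪s̄, λ⟫` loses. The dual objective therefore does not
decrease along `-s̄`, so `-s̄` is a recession direction of `Sol(D(s̄))`, and a nonempty set with a
nonzero recession direction is unbounded.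
-/

theorem Convex.inner_self_le_inner_of_forall_norm_le {F : Type*} [NormedAddCommGroup F]
    [InnerProductSpace ℝ F] {S : Set F} (hS : Convex ℝ S) {x : F} (hx : x ∈ S)
    (hmin : ∀ s ∈ S, ‖x‖ ≤ ‖s‖) {s : F} (hs : s ∈ S) : ⟪x, x⟫ ≤ ⟪x, s⟫ := by
  have : Nonempty S := ⟨⟨x, hx⟩⟩
  have hnorm : ‖0 - x‖ = ⨅ w : S, ‖0 - (w : F)‖ := by
    refine le_antisymm (le_ciInf fun w => by simpa using hmin w w.2) ?_
    have hbdd : BddBelow (range fun w : S => ‖0 - (w : F)‖) :=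
      ⟨0, forall_mem_range.2 fun _ => norm_nonneg _⟩
    exact ciInf_le hbdd ⟨x, hx⟩
  have h := (norm_eq_iInf_iff_real_inner_le_zero hS hx).mp hnorm s hs
  rw [zero_sub, inner_neg_left, inner_sub_right] at h
  linarith

def lagrInf {X : Type*} (f : X → ℝ) (g : X → Y) (K : Set Y) (l : Y) : EReal :=
  sInf ((fun p : X × Y => ((lagr f g p.1 p.2 l : ℝ) : EReal)) '' {p | p.2 ∈ K})

theorem dualFn_eq_neg_lagrInf {X : Type*} (f : X → ℝ) (g : X → Y) (K : Set Y) (l : Y) :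
    dualFn f g K l = -lagrInf f g K l :=
  rfl

section

variable {X : Type*} {g : X → Y} {K : Set Y}

theorem convex_feasShifts [AddCommGroup X] [Module ℝ X] (hgraph : Convex ℝ (gphGK g K)) :
    Convex ℝ (feasShifts g K) := by
  have himage : feasShifts g K = Prod.snd '' gphGK g K := by
    ext s
    constructor
    · rintro ⟨x, hx⟩
      exact ⟨(x, s), hx, rfl⟩
    · rintro ⟨⟨x, s'⟩, hp, rfl⟩
      exact ⟨x, hp⟩
  rw [himage]
  exact hgraph.linear_image (LinearMap.snd ℝ X Y)

theorem lagr_sub_smul (f : X → ℝ) (x : X) (y l d : Y) (t : ℝ) :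
    lagr f g x y (l - t • d) = lagr f g x y l + t * ⟪d, y - g x⟫ := by
  rw [lagr, lagr, inner_sub_left, real_inner_smul_left, ← neg_sub (g x) y, inner_neg_right]
  ring

theorem lagrInf_add_le_lagrInf_sub_smul (f : X → ℝ) {d : Y} {c : ℝ}
    (hc : ∀ s ∈ feasShifts g K, c ≤ ⟪d, s⟫) (l : Y) {t : ℝ} (ht : 0 ≤ t) :
    lagrInf f g K l + ((t * c : ℝ) : EReal) ≤ lagrInf f g K (l - t • d) := by
  refine le_sInf ?_
  rintro _ ⟨⟨x, y⟩, hy, rfl⟩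
  have hshift : y - g x ∈ feasShifts g K := by
    refine ⟨x, ?_⟩
    rwa [add_sub_cancel]
  have hlagr : lagr f g x y l + t * c ≤ lagr f g x y (l - t • d) := by
    rw [lagr_sub_smul]
    gcongr
    exact hc _ hshift
  calc _ ≤ ((lagr f g x y l : ℝ) : EReal) + ((t * c : ℝ) : EReal) :=
        add_le_add (sInf_le (mem_image_of_mem
          (fun p : X × Y => ((lagr f g p.1 p.2 l : ℝ) : EReal)) hy)) le_rfl
    _ ≤ ((lagr f g x y (l - t • d) : ℝ) : EReal) := by exact_mod_cast hlagr

theorem dualObj_le_dualObj_sub_smul (f : X → ℝ) {s d : Y}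
    (hd : ∀ s' ∈ feasShifts g K, ⟪d, s⟫ ≤ ⟪d, s'⟫) (l : Y) {t : ℝ} (ht : 0 ≤ t) :
    (⟪s, l⟫ : EReal) - dualFn f g K l ≤
      (⟪s, l - t • d⟫ : EReal) - dualFn f g K (l - t • d) := by
  have hinf := lagrInf_add_le_lagrInf_sub_smul f hd l ht
  rw [real_inner_comm s d] at hinf
  rw [dualFn_eq_neg_lagrInf, dualFn_eq_neg_lagrInf]
  set m := lagrInf f g K l
  set m' := lagrInf f g K (l - t • d)
  calc (⟪s, l⟫ : EReal) - -m
        = ((⟪s, l⟫ - t * ⟪s, d⟫ : ℝ) : EReal) + (m + ((t * ⟪s, d⟫ : ℝ) : EReal)) := by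
        rw [sub_eq_add_neg _ (-m), neg_neg, ← add_assoc, add_right_comm, ← EReal.coe_add,
          sub_add_cancel]
    _ ≤ ((⟪s, l⟫ - t * ⟪s, d⟫ : ℝ) : EReal) + m' := add_le_add le_rfl hinf
    _ = (⟪s, l - t • d⟫ : EReal) - -m' := by
        rw [sub_eq_add_neg _ (-m'), neg_neg, inner_sub_right, real_inner_smul_right]

theorem neg_mem_recCone_dualSol (f : X → ℝ) {s d : Y}
    (hd : ∀ s' ∈ feasShifts g K, ⟪d, s⟫ ≤ ⟪d, s'⟫) : -d ∈ recCone (dualSol f g K s) := by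
  intro l hl t ht l'
  rw [smul_neg, ← sub_eq_add_neg]
  exact (hl l').trans (dualObj_le_dualObj_sub_smul f hd l ht)

end

theorem not_isBounded_of_mem_recCone {F : Type*} [NormedAddCommGroup F] [NormedSpace ℝ F]
    {C : Set F} (hC : C.Nonempty) {d : F} (hd : d ≠ 0) (hrec : d ∈ recCone C) :
    ¬ Bornology.IsBounded C := by
  intro hb
  obtain ⟨R, hR⟩ := isBounded_iff_forall_norm_le.mp hb
  obtain ⟨z, hz⟩ := hC
  have hdpos : 0 < ‖d‖ := norm_pos_iff.mpr hd
  set t := (R + ‖z‖ + 1) / ‖d‖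
  have ht : 0 ≤ t := div_nonneg (by linarith [norm_nonneg z, hR z hz]) hdpos.le
  have hfar : R + ‖z‖ + 1 - ‖z‖ ≤ ‖z + t • d‖ := by
    calc R + ‖z‖ + 1 - ‖z‖ = ‖t • d‖ - ‖z‖ := by
          rw [norm_smul, Real.norm_of_nonneg ht, div_mul_cancel₀ _ hdpos.ne']
      _ ≤ ‖z + t • d‖ := by
          rw [add_comm]
          exact norm_sub_le_norm_add _ _
  linarith [hR _ (hrec z hz t ht)]

theorem dualSol_unbounded_general {n : ℕ} {Y : Type*} [NormedAddCommGroup Y]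
    [InnerProductSpace ℝ Y]
    (f : EuclideanSpace ℝ (Fin n) → ℝ) (g : EuclideanSpace ℝ (Fin n) → Y) (K : Set Y)
    (hgraph : Convex ℝ (gphGK g K))
    (sbar : Y) (hsbarS : sbar ∈ feasShifts g K)
    (hsbarmin : ∀ s ∈ feasShifts g K, ‖sbar‖ ≤ ‖s‖)
    (hsbarne : sbar ≠ 0)
    (hSolne : (dualSol f g K sbar).Nonempty) :
    ¬ Bornology.IsBounded (dualSol f g K sbar) ∧
    -sbar ∈ recCone (dualSol f g K sbar) ∧
    ∀ lbar ∈ dualSol f g K sbar, ∀ t : ℝ, 0 ≤ t → lbar - t • sbar ∈ dualSol f g K sbar := by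
  have hproj : ∀ s ∈ feasShifts g K, ⟪sbar, sbar⟫ ≤ ⟪sbar, s⟫ := fun _ hs =>
    (convex_feasShifts hgraph).inner_self_le_inner_of_forall_norm_le hsbarS hsbarmin hs
  have hrec := neg_mem_recCone_dualSol f hproj
  refine ⟨not_isBounded_of_mem_recCone hSolne (neg_ne_zero.mpr hsbarne) hrec, hrec, ?_⟩
  intro lbar hlbar t ht
  rw [sub_eq_add_neg, ← smul_neg]
  exact hrec lbar hlbar t ht

/-- Proposition 4.2: under the standing assumptions, `Sol(D(s̄))` is
unbounded and `-s̄ ∈ [Sol(D(s̄))]^∞`; in particular `λ̄ - t s̄ ∈ Sol(D(s̄))` for every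
`λ̄ ∈ Sol(D(s̄))` and `t ≥ 0`. -/
theorem dualSol_unbounded {n : ℕ} {Y : Type*} [NormedAddCommGroup Y]
    [InnerProductSpace ℝ Y] [FiniteDimensional ℝ Y]
    (f : EuclideanSpace ℝ (Fin n) → ℝ) (g : EuclideanSpace ℝ (Fin n) → Y) (K : Set Y)
    (hfconv : ConvexOn ℝ Set.univ f)
    (hKne : K.Nonempty) (hKclosed : IsClosed K) (hKconv : Convex ℝ K)
    (hgraph : Convex ℝ (gphGK g K))
    (hSclosed : IsClosed (feasShifts g K))
    (sbar : Y) (hsbarS : sbar ∈ feasShifts g K)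
    (hsbarmin : ∀ s ∈ feasShifts g K, ‖sbar‖ ≤ ‖s‖)
    (hsbarne : sbar ≠ 0)
    (hval : ∃ v : ℝ, valFn f g K sbar = (v : EReal))
    (hlsc : LowerSemicontinuousAt (valFn f g K) sbar)
    (hSolne : (dualSol f g K sbar).Nonempty) :
    ¬ Bornology.IsBounded (dualSol f g K sbar) ∧
    -sbar ∈ recCone (dualSol f g K sbar) ∧
    ∀ lbar ∈ dualSol f g K sbar, ∀ t : ℝ, 0 ≤ t → lbar - t • sbar ∈ dualSol f g K sbar :=
  dualSol_unbounded_general f g K hgraph sbar hsbarS hsbarmin hsbarne hSolne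
end
end

section
/- Assume s̄ ≠ 0, g : ℝⁿ → Y is a smooth mapping, and G_K is graph-convex. Then for (x̄, ȳ) ∈ ℝⁿ × Y the following are equivalent: (i) ȳ − g(x̄) = s̄ and ȳ ∈ K; (ii) Dg(x̄)*(g(x̄) − ȳ) = 0 and Π_K(g(x̄)) = ȳ; (iii) (x̄, ȳ) is a solution of min{½‖g(x) − y‖² : x ∈ ℝⁿ, y ∈ K}. -/
open Set Filter Topology Bornology Metric
open scoped RealInnerProductSpace

noncomputable section

variable {E : Type*} [NormedAddCommGroup E] [InnerProductSpace ℝ E]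
variable {Y : Type*} [NormedAddCommGroup Y] [InnerProductSpace ℝ Y]

section AuxLemmas

variable {Z : Type*} [NormedAddCommGroup Z] [InnerProductSpace ℝ Z]

/-- Variational characterization of projections: the inner-product inequality. -/
lemma proj_inner_le' {K : Set Z} (hK : Convex ℝ K) {u v : Z} (hv : v ∈ K)
    (hmin : ∀ y ∈ K, ‖u - v‖ ≤ ‖u - y‖) : ∀ w ∈ K, ⟪u - v, w - v⟫ ≤ 0 := by
  haveI : Nonempty K := ⟨⟨v, hv⟩⟩
  have hbdd : BddBelow (Set.range fun w : K => ‖u - w‖) := by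
    refine ⟨0, ?_⟩; rintro _ ⟨w, rfl⟩; exact norm_nonneg _
  have heq : ‖u - v‖ = ⨅ w : K, ‖u - w‖ :=
    le_antisymm (le_ciInf fun w => hmin w w.2) (ciInf_le hbdd ⟨v, hv⟩)
  exact (norm_eq_iInf_iff_real_inner_le_zero hK hv).mp heq

/-- Derivative of `t ↦ ⟪s, g (x + t • d)⟫` at `0`. -/
lemma inner_g_hasDerivAt {n : ℕ} {g : EuclideanSpace ℝ (Fin n) → Z} (hg : ContDiff ℝ (⊤ : ℕ∞) g)
    (x d : EuclideanSpace ℝ (Fin n)) (s : Z) :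
    HasDerivAt (fun t : ℝ => ⟪s, g (x + t • d)⟫) ⟪s, fderiv ℝ g x d⟫ 0 := by
  have hline : HasDerivAt (fun t : ℝ => x + t • d) d 0 := by
    simpa using ((hasDerivAt_id (0 : ℝ)).smul_const d).const_add x
  have hgd : HasDerivAt (fun t : ℝ => g (x + t • d)) (fderiv ℝ g x d) 0 := by
    have h0 : x + (0 : ℝ) • d = x := by simp
    have := ((hg.differentiable (by simp) (x + (0:ℝ) • d)).hasFDerivAt).comp_hasDerivAt 0 hline
    simpa [h0, Function.comp_def] using this
  have := (hasDerivAt_const (0 : ℝ) s).inner ℝ hgd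
  simpa using this

/-- Derivative of `t ↦ g (x + t • d)` at `0`, with the point `g x` and derivative recorded. -/
lemma g_line_hasDerivAt {n : ℕ} {g : EuclideanSpace ℝ (Fin n) → Z} (hg : ContDiff ℝ (⊤ : ℕ∞) g)
    (x d : EuclideanSpace ℝ (Fin n)) :
    HasDerivAt (fun t : ℝ => g (x + t • d)) (fderiv ℝ g x d) 0 := by
  have hline : HasDerivAt (fun t : ℝ => x + t • d) d 0 := by
    simpa using ((hasDerivAt_id (0 : ℝ)).smul_const d).const_add x
  have h0 : x + (0 : ℝ) • d = x := by simp
  have := ((hg.differentiable (by simp) (x + (0:ℝ) • d)).hasFDerivAt).comp_hasDerivAt 0 hline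
  simpa [h0, Function.comp_def] using this

end AuxLemmas

/-- Lemma 4.2: characterizations of the pairs `(x̄, ȳ)` realizing the
least violated shift: (i) `ȳ - g(x̄) = s̄` and `ȳ ∈ K`; (ii) `Dg(x̄)*(g(x̄) - ȳ) = 0` and
`Π_K(g(x̄)) = ȳ`; (iii) `(x̄, ȳ)` minimizes `½‖g(x) - y‖²` over `ℝⁿ × K`. -/
theorem least_shift_characterizations {n : ℕ} {Y : Type*} [NormedAddCommGroup Y]
    [InnerProductSpace ℝ Y] [FiniteDimensional ℝ Y]
    (g : EuclideanSpace ℝ (Fin n) → Y) (K : Set Y)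
    (hg : ContDiff ℝ (⊤ : ℕ∞) g)
    (hKne : K.Nonempty) (hKclosed : IsClosed K) (hKconv : Convex ℝ K)
    (hgraph : Convex ℝ (gphGK g K))
    (hSclosed : IsClosed (feasShifts g K))
    (sbar : Y) (hsbarS : sbar ∈ feasShifts g K)
    (hsbarmin : ∀ s ∈ feasShifts g K, ‖sbar‖ ≤ ‖s‖)
    (hsbarne : sbar ≠ 0)
    (xbar : EuclideanSpace ℝ (Fin n)) (ybar : Y) :
    -- (i) ↔ (ii)
    ((ybar - g xbar = sbar ∧ ybar ∈ K) ↔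
      (ContinuousLinearMap.adjoint (fderiv ℝ g xbar) (g xbar - ybar) = 0 ∧
        (ybar ∈ K ∧ ∀ y ∈ K, ‖g xbar - ybar‖ ≤ ‖g xbar - y‖))) ∧
    -- (i) ↔ (iii)
    ((ybar - g xbar = sbar ∧ ybar ∈ K) ↔
      (ybar ∈ K ∧ ∀ (x : EuclideanSpace ℝ (Fin n)) (y : Y), y ∈ K →
        (1 : ℝ) / 2 * ‖g xbar - ybar‖ ^ 2 ≤ (1 : ℝ) / 2 * ‖g x - y‖ ^ 2)) := by
  have hK1top := hKne
  -- convexity of the set of feasible shifts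
  have hSconv : Convex ℝ (feasShifts g K) := by
    rintro s1 ⟨x1, hx1⟩ s2 ⟨x2, hx2⟩ a b ha hb hab
    have h1 : ((x1, s1) : _ × Y) ∈ gphGK g K := hx1
    have h2 : ((x2, s2) : _ × Y) ∈ gphGK g K := hx2
    have hmem := hgraph h1 h2 ha hb hab
    exact ⟨a • x1 + b • x2, hmem⟩
  -- (i) → (iii)
  have h13 : (ybar - g xbar = sbar ∧ ybar ∈ K) →
      (ybar ∈ K ∧ ∀ (x : EuclideanSpace ℝ (Fin n)) (y : Y), y ∈ K →
        (1 : ℝ) / 2 * ‖g xbar - ybar‖ ^ 2 ≤ (1 : ℝ) / 2 * ‖g x - y‖ ^ 2) := by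
    rintro ⟨h1, hK1⟩
    refine ⟨hK1, fun x y hy => ?_⟩
    have hmemS : y - g x ∈ feasShifts g K := ⟨x, by simpa [add_sub_cancel] using hy⟩
    have hle := hsbarmin _ hmemS
    have e1 : ‖g xbar - ybar‖ = ‖sbar‖ := by rw [norm_sub_rev, h1]
    have e2 : ‖g x - y‖ = ‖y - g x‖ := norm_sub_rev _ _
    rw [e1, e2]
    nlinarith [norm_nonneg sbar, norm_nonneg (y - g x)]
  -- (iii) → (i)
  have h31 : (ybar ∈ K ∧ ∀ (x : EuclideanSpace ℝ (Fin n)) (y : Y), y ∈ K →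
        (1 : ℝ) / 2 * ‖g xbar - ybar‖ ^ 2 ≤ (1 : ℝ) / 2 * ‖g x - y‖ ^ 2) →
      (ybar - g xbar = sbar ∧ ybar ∈ K) := by
    rintro ⟨hK1, hmin⟩
    have hss : ybar - g xbar ∈ feasShifts g K := ⟨xbar, by simpa [add_sub_cancel] using hK1⟩
    have hsle : ∀ s' ∈ feasShifts g K, ‖ybar - g xbar‖ ≤ ‖s'‖ := by
      rintro s' ⟨x', hx'⟩
      have := hmin x' (g x' + s') hx'
      have e2 : ‖g x' - (g x' + s')‖ = ‖s'‖ := by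
        rw [show g x' - (g x' + s') = -s' by abel, norm_neg]
      rw [e2] at this
      have e1 : ‖g xbar - ybar‖ = ‖ybar - g xbar‖ := norm_sub_rev _ _
      nlinarith [norm_nonneg (ybar - g xbar), norm_nonneg s']
    set s : Y := ybar - g xbar with hsdef
    have h1 : ‖sbar‖ ≤ ‖s‖ := hsbarmin s hss
    have h2 : ‖s‖ ≤ ‖sbar‖ := hsle sbar hsbarS
    have hm : (1/2 : ℝ) • s + (1/2 : ℝ) • sbar ∈ feasShifts g K :=
      hSconv hss hsbarS (by norm_num) (by norm_num) (by norm_num)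
    have h3 : ‖sbar‖ ≤ ‖(1/2 : ℝ) • s + (1/2 : ℝ) • sbar‖ := hsbarmin _ hm
    have hm' : ‖(1/2 : ℝ) • s + (1/2 : ℝ) • sbar‖ = 1/2 * ‖s + sbar‖ := by
      rw [← smul_add, norm_smul]; simp
    rw [hm'] at h3
    have hkey : ‖s - sbar‖ ^ 2 ≤ 0 := by
      nlinarith [norm_add_sq_real s sbar, norm_sub_sq_real s sbar, norm_nonneg (s + sbar),
        norm_nonneg sbar]
    have h0 : ‖s - sbar‖ = 0 := le_antisymm (by nlinarith [norm_nonneg (s - sbar)]) (norm_nonneg _)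
    exact ⟨sub_eq_zero.mp (norm_eq_zero.mp h0), hK1⟩
  -- (iii) → (ii)
  have h32 : (ybar ∈ K ∧ ∀ (x : EuclideanSpace ℝ (Fin n)) (y : Y), y ∈ K →
        (1 : ℝ) / 2 * ‖g xbar - ybar‖ ^ 2 ≤ (1 : ℝ) / 2 * ‖g x - y‖ ^ 2) →
      (ContinuousLinearMap.adjoint (fderiv ℝ g xbar) (g xbar - ybar) = 0 ∧
        (ybar ∈ K ∧ ∀ y ∈ K, ‖g xbar - ybar‖ ≤ ‖g xbar - y‖)) := by
    rintro ⟨hK1, hmin⟩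
    refine ⟨?_, hK1, fun y hy => ?_⟩
    · -- stationarity in x
      apply ext_inner_right ℝ
      intro v
      rw [ContinuousLinearMap.adjoint_inner_left, inner_zero_left]
      -- consider q t = ⟪g(xbar + t v) - ybar, g(xbar + t v) - ybar⟫
      have hF : HasDerivAt (fun t : ℝ => g (xbar + t • v) - ybar) (fderiv ℝ g xbar v) 0 :=
        (g_line_hasDerivAt hg xbar v).sub_const ybar
      have hq : HasDerivAt (fun t : ℝ => ⟪g (xbar + t • v) - ybar, g (xbar + t • v) - ybar⟫)
          (⟪g (xbar + (0:ℝ) • v) - ybar, fderiv ℝ g xbar v⟫ +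
           ⟪fderiv ℝ g xbar v, g (xbar + (0:ℝ) • v) - ybar⟫) 0 := hF.inner ℝ hF
      have hmin' : IsLocalMin (fun t : ℝ => ⟪g (xbar + t • v) - ybar, g (xbar + t • v) - ybar⟫)
          0 := by
        apply Filter.Eventually.of_forall
        intro t
        simp only [real_inner_self_eq_norm_sq]
        have := hmin (xbar + t • v) ybar hK1
        have h00 : xbar + (0:ℝ) • v = xbar := by simp
        rw [h00]
        linarith
      have hd0 := hmin'.deriv_eq_zero
      rw [hq.deriv] at hd0
      have h00 : xbar + (0:ℝ) • v = xbar := by simp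
      rw [h00] at hd0
      have hcomm : ⟪fderiv ℝ g xbar v, g xbar - ybar⟫ = ⟪g xbar - ybar, fderiv ℝ g xbar v⟫ :=
        real_inner_comm _ _
      linarith
    · -- projection property
      have := hmin xbar y hy
      nlinarith [norm_nonneg (g xbar - ybar), norm_nonneg (g xbar - y)]
  -- (ii) → (iii)
  have h23 : (ContinuousLinearMap.adjoint (fderiv ℝ g xbar) (g xbar - ybar) = 0 ∧
        (ybar ∈ K ∧ ∀ y ∈ K, ‖g xbar - ybar‖ ≤ ‖g xbar - y‖)) →
      (ybar ∈ K ∧ ∀ (x : EuclideanSpace ℝ (Fin n)) (y : Y), y ∈ K →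
        (1 : ℝ) / 2 * ‖g xbar - ybar‖ ^ 2 ≤ (1 : ℝ) / 2 * ‖g x - y‖ ^ 2) := by
    rintro ⟨hadj, hK1, hproj⟩
    refine ⟨hK1, fun x' y' hy' => ?_⟩
    set s : Y := ybar - g xbar with hsdef
    set s' : Y := y' - g x' with hs'def
    set d : EuclideanSpace ℝ (Fin n) := x' - xbar with hddef
    set w : Y := s' - s with hwdef
    have hyb : g xbar + s = ybar := by rw [hsdef]; abel
    -- normal cone inequality at ybar
    have hinnK : ∀ y ∈ K, 0 ≤ ⟪s, y - ybar⟫ := by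
      intro y hy
      have h := proj_inner_le' hKconv hK1 hproj y hy
      have h2 : ⟪s, y - ybar⟫ = -⟪g xbar - ybar, y - ybar⟫ := by
        rw [hsdef, ← neg_sub (g xbar) ybar, inner_neg_left]
      rw [h2]; linarith
    -- path inside the graph
    have hpath : ∀ t ∈ Icc (0:ℝ) 1, g (xbar + t • d) + (s + t • w) ∈ K := by
      intro t ht
      have h1 : ((xbar, s) : _ × Y) ∈ gphGK g K := by
        show g xbar + s ∈ K; rw [hyb]; exact hK1
      have h2 : ((x', s') : _ × Y) ∈ gphGK g K := by
        show g x' + s' ∈ K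
        rw [hs'def, add_sub_cancel]; exact hy'
      have hmem := hgraph h1 h2 (sub_nonneg.mpr ht.2) ht.1 (by ring)
      have hmem' : g ((1 - t) • xbar + t • x') + ((1 - t) • s + t • s') ∈ K := hmem
      have e1 : (1 - t) • xbar + t • x' = xbar + t • d := by rw [hddef]; module
      have e2 : (1 - t) • s + t • s' = s + t • w := by rw [hwdef]; module
      rwa [e1, e2] at hmem'
    -- nonnegativity of h
    have hnn : ∀ t ∈ Icc (0:ℝ) 1,
        0 ≤ ⟪s, g (xbar + t • d) - g xbar⟫ + t * ⟪s, w⟫ := by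
      intro t ht
      have h := hinnK _ (hpath t ht)
      have e : g (xbar + t • d) + (s + t • w) - ybar
          = (g (xbar + t • d) - g xbar) + t • w := by rw [← hyb]; abel
      rw [e, inner_add_right, real_inner_smul_right] at h
      exact h
    -- derivative of h at 0 is ⟪s, w⟫
    have hDgs : ContinuousLinearMap.adjoint (fderiv ℝ g xbar) s = 0 := by
      rw [hsdef, ← neg_sub (g xbar) ybar, map_neg, hadj, neg_zero]
    have hinner0 : ⟪s, fderiv ℝ g xbar d⟫ = 0 := by
      rw [← ContinuousLinearMap.adjoint_inner_left, hDgs, inner_zero_left]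
    have hder : HasDerivAt
        (fun t : ℝ => ⟪s, g (xbar + t • d) - g xbar⟫ + t * ⟪s, w⟫) ⟪s, w⟫ 0 := by
      have ha : HasDerivAt (fun t : ℝ => ⟪s, g (xbar + t • d)⟫) 0 0 := by
        have := inner_g_hasDerivAt hg xbar d s
        rwa [hinner0] at this
      have hb : HasDerivAt (fun t : ℝ => ⟪s, g (xbar + t • d)⟫ - ⟪s, g xbar⟫) 0 0 :=
        ha.sub_const _
      have hc : HasDerivAt (fun t : ℝ => t * ⟪s, w⟫) ⟪s, w⟫ 0 := by
        simpa using (hasDerivAt_id (0:ℝ)).mul_const ⟪s, w⟫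
      have heq : (fun t : ℝ => ⟪s, g (xbar + t • d) - g xbar⟫ + t * ⟪s, w⟫)
          = fun t : ℝ => (⟪s, g (xbar + t • d)⟫ - ⟪s, g xbar⟫) + t * ⟪s, w⟫ := by
        funext t; rw [inner_sub_right]
      rw [heq]
      have := hb.add hc; rw [zero_add] at this; exact this
    -- slope argument: ⟪s, w⟫ ≥ 0
    have hge : 0 ≤ ⟪s, w⟫ := by
      set hfn : ℝ → ℝ := fun t => ⟪s, g (xbar + t • d) - g xbar⟫ + t * ⟪s, w⟫ with hhfn
      have hslope := hasDerivAt_iff_tendsto_slope.mp hder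
      have hmono : Tendsto (slope hfn 0) (𝓝[>] (0:ℝ)) (𝓝 ⟪s, w⟫) :=
        hslope.mono_left (nhdsWithin_mono 0 fun t ht =>
          Set.mem_compl_singleton_iff.mpr (ne_of_gt ht))
      refine ge_of_tendsto hmono ?_
      filter_upwards [Ioo_mem_nhdsGT_of_mem (show (0:ℝ) ∈ Ico (0:ℝ) 1 from ⟨le_refl _, one_pos⟩)]
        with t ht
      have h0 : hfn 0 = 0 := by simp [hhfn]
      rw [slope_def_field, h0, sub_zero, sub_zero]
      exact div_nonneg (hnn t ⟨ht.1.le, ht.2.le⟩) ht.1.le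
    -- conclude
    have e1 : ‖g xbar - ybar‖ = ‖s‖ := by rw [hsdef, norm_sub_rev]
    have e2 : ‖g x' - y'‖ = ‖s + w‖ := by
      rw [show s + w = s' by rw [hwdef]; abel, hs'def, norm_sub_rev]
    rw [e1, e2]
    nlinarith [norm_add_sq_real s w, sq_nonneg ‖w‖]
  exact ⟨⟨fun h1 => h32 (h13 h1), fun h2 => h31 (h23 h2)⟩, ⟨h13, h31⟩⟩
end
end
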